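/- arXiv:math/0703481 — 4 statements merged into one kernel-verified Lean document; each statement's English description precedes it below -/
import Mathlib

section
/- Let T > 0, θ ∈ [0,1) and C > 0, and let φ : [0,T) → [0,∞) be a Borel-measurable function satisfying φ(u) ≤ C (T − u)^{−θ} for all u ∈ [0,T). Choose η as follows: η = 0 if θ ∈ [0,1/2), and fix any η ∈ (2θ − 1, 1) if θ ∈ [1/2,1). Then there exists a constant C' > 0 such that for every n ≥ 1, ∑_{i=1}^{n} ∫_{t_{i-1}^η}^{t_i^η} ∫_{t_{i-1}^η}^{u} φ(s)² ds du ≤ C'/n, where t_i^η denotes the points of the η-net. -/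
/-!
In the variable `(T - t) ^ (1 - η)` the η-net is equidistant with step `T ^ (1 - η) / n`, so
concavity of `x ↦ x ^ (1 - η)` gives `t_{i+1} - s ≤ T ^ (1 - η) / ((1 - η) n) * (T - s) ^ η`
for `s` in the cell `[t_i, t_{i+1}]`. By Tonelli the `i`-th term of the sum is
`∫_{t_i}^{t_{i+1}} (t_{i+1} - s) φ(s)² ds`, so the whole sum is at most
`T ^ (1 - η) / ((1 - η) n) * ∫_0^T (T - s) ^ η φ(s)² ds`, and this integral is finite because
`(T - s) ^ η φ(s)² ≤ C² (T - s) ^ (η - 2θ)` with `η - 2θ > -1`.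
-/

open MeasureTheory Real

/-- The η-net on `[0,T]` with `n + 1` knots:
`t_i^η = T (1 - (1 - i/n)^{1/(1-η)})`. -/
noncomputable def tnet (T η : ℝ) (n i : ℕ) : ℝ :=
  T * (1 - (1 - (i : ℝ) / (n : ℝ)) ^ ((1 : ℝ) / (1 - η)))

open Set

theorem mul_sub_le_rpow_sub_rpow_mul {a b q : ℝ} (ha : 0 ≤ a) (hab : a ≤ b) (hq0 : 0 ≤ q)
    (hq1 : q ≤ 1) : q * (b - a) ≤ (b ^ q - a ^ q) * b ^ (1 - q) := by
  rcases hab.eq_or_lt with rfl | hab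
  · simp
  have hb : 0 < b := ha.trans_lt hab
  have hbq : b ^ q * b ^ (1 - q) = b := by rw [← rpow_add hb]; simp
  have bernoulli := rpow_one_add_le_one_add_mul_self (s := a / b - 1)
    (by linarith [div_nonneg ha hb.le]) hq0 hq1
  rw [add_sub_cancel, div_rpow ha hb.le, div_le_iff₀ (rpow_pos_of_pos hb q)] at bernoulli
  have := mul_le_mul_of_nonneg_right bernoulli (rpow_nonneg hb.le (1 - q))
  rw [mul_assoc, hbq] at this
  field_simp at this
  rw [sub_mul, hbq]
  linarith

theorem lintegral_Ioc_lintegral_Ioc {f : ℝ → ENNReal} (hf : Measurable f) (c d : ℝ) :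
    ∫⁻ u in Ioc c d, ∫⁻ s in Ioc c u, f s = ∫⁻ s in Ioc c d, ENNReal.ofReal (d - s) * f s := by
  set S : Set (ℝ × ℝ) := {p | c < p.2 ∧ p.2 ≤ p.1}
  have hS : MeasurableSet S := (measurableSet_lt measurable_const measurable_snd).inter
    (measurableSet_le measurable_snd measurable_fst)
  have hinner : ∀ u, ∫⁻ s in Ioc c u, f s = ∫⁻ s, S.indicator (fun p => f p.2) (u, s) := by
    intro u
    rw [← lintegral_indicator measurableSet_Ioc]
    rfl
  simp_rw [hinner]
  rw [lintegral_lintegral_swap (f := fun u s => S.indicator (fun p => f p.2) (u, s))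
    ((hf.comp measurable_snd).indicator hS).aemeasurable,
    ← lintegral_indicator measurableSet_Ioc]
  congr 1 with s
  by_cases hcs : c < s
  · have hslice : ∀ u, S.indicator (fun p => f p.2) (u, s) = (Ici s).indicator (fun _ => f s) u := by
      intro u; simp [S, indicator, hcs]
    have hIcc : Ici s ∩ Ioc c d = Icc s d := by
      ext u
      simp only [mem_inter_iff, mem_Ici, mem_Ioc, mem_Icc]
      exact ⟨fun ⟨hsu, _, hud⟩ => ⟨hsu, hud⟩, fun ⟨hsu, hud⟩ => ⟨hsu, hcs.trans_le hsu, hud⟩⟩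
    simp_rw [hslice]
    rw [lintegral_indicator_const measurableSet_Ici, Measure.restrict_apply measurableSet_Ici,
      hIcc, volume_Icc, mul_comm]
    by_cases hsd : s ≤ d
    · simp [indicator, hcs, hsd]
    · simp [indicator, hsd, ENNReal.ofReal_of_nonpos (by linarith : d - s ≤ 0)]
  · simp [S, indicator, hcs]

theorem integral_integral_le_of_sub_mul_le {f g : ℝ → ℝ} {c d : ℝ} (hcd : c ≤ d)
    (hfm : Measurable f) (hf0 : ∀ s, 0 ≤ f s) (hg : IntervalIntegrable g volume c d)
    (hfg : ∀ s ∈ Ioo c d, (d - s) * f s ≤ g s) :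
    ∫ u in c..d, ∫ s in c..u, f s ≤ ∫ s in c..d, g s := by
  -- `f` itself need not be integrable up to `d`, so the argument runs through lower integrals.
  set G : ℝ → ENNReal := fun u => ∫⁻ s in Ioc c u, ENNReal.ofReal (f s)
  have hGm : Measurable G :=
    Monotone.measurable fun u v huv => lintegral_mono_set (Ioc_subset_Ioc_right huv)
  have hfg_ae : ∀ᵐ s ∂volume.restrict (Ioc c d), (d - s) * f s ≤ g s := by
    rw [← Measure.restrict_congr_set Ioo_ae_eq_Ioc]
    exact (ae_restrict_iff' measurableSet_Ioo).2 (ae_of_all _ hfg)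
  have hg0 : 0 ≤ᵐ[volume.restrict (Ioc c d)] g := by
    filter_upwards [hfg_ae, ae_restrict_mem measurableSet_Ioc] with s hs hsI
    exact (mul_nonneg (sub_nonneg.2 hsI.2) (hf0 s)).trans hs
  have hg' : IntegrableOn g (Ioc c d) := (intervalIntegrable_iff_integrableOn_Ioc_of_le hcd).1 hg
  have hGg : ∫⁻ u in Ioc c d, G u ≤ ENNReal.ofReal (∫ s in c..d, g s) := by
    rw [lintegral_Ioc_lintegral_Ioc hfm.ennreal_ofReal, intervalIntegral.integral_of_le hcd,
      ofReal_integral_eq_lintegral_ofReal hg' hg0]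
    refine lintegral_mono_ae ?_
    filter_upwards [hfg_ae, ae_restrict_mem measurableSet_Ioc] with s hs hsI
    rw [← ENNReal.ofReal_mul (sub_nonneg.2 hsI.2)]
    exact ENNReal.ofReal_le_ofReal hs
  have hG_fin : ∀ᵐ u ∂volume.restrict (Ioc c d), G u < ⊤ :=
    ae_lt_top hGm (ne_top_of_le_ne_top ENNReal.ofReal_ne_top hGg)
  calc ∫ u in c..d, ∫ s in c..u, f s = ∫ u in Ioc c d, (G u).toReal := by
        rw [intervalIntegral.integral_of_le hcd]
        refine setIntegral_congr_fun measurableSet_Ioc fun u hu => ?_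
        rw [intervalIntegral.integral_of_le hu.1.le, integral_eq_lintegral_of_nonneg_ae
          (ae_of_all _ hf0) hfm.aestronglyMeasurable]
    _ = (∫⁻ u in Ioc c d, G u).toReal := integral_toReal hGm.aemeasurable hG_fin
    _ ≤ ∫ s in c..d, g s := by
        refine ENNReal.toReal_le_of_le_ofReal ?_ hGg
        rw [intervalIntegral.integral_of_le hcd]
        exact integral_nonneg_of_ae hg0

theorem integral_sub_rpow {T e : ℝ} (he : -1 < e) :
    ∫ s in 0..T, (T - s) ^ e = T ^ (e + 1) / (e + 1) := by
  rw [intervalIntegral.integral_comp_sub_left (fun x => x ^ e) T, sub_self, sub_zero,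
    integral_rpow (Or.inl he), zero_rpow (by linarith), sub_zero]

theorem intervalIntegrable_sub_rpow {e : ℝ} (he : -1 < e) (T a b : ℝ) :
    IntervalIntegrable (fun s => (T - s) ^ e) volume a b := by
  simpa using (intervalIntegral.intervalIntegrable_rpow' (a := T - a) (b := T - b) he).comp_sub_left T

section tnet

variable {T η : ℝ} {n i : ℕ}

theorem tnet_zero : tnet T η n 0 = 0 := by
  simp [tnet]

theorem tnet_self (hη : η < 1) (hn : n ≠ 0) : tnet T η n n = T := by
  have : (1 - η)⁻¹ ≠ 0 := inv_ne_zero (by linarith)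
  simp [tnet, hn, zero_rpow this]

theorem one_sub_div_nonneg_of_le (hin : i ≤ n) : 0 ≤ 1 - (i : ℝ) / n := by
  rcases n.eq_zero_or_pos with rfl | hn
  · simp_all
  rw [sub_nonneg, div_le_one (by positivity)]
  exact_mod_cast hin

theorem sub_tnet :
    T - tnet T η n i = T * (1 - (i : ℝ) / n) ^ ((1 : ℝ) / (1 - η)) := by
  unfold tnet; ring

theorem tnet_nonneg (hT : 0 ≤ T) (hη : η < 1) (hin : i ≤ n) : 0 ≤ tnet T η n i := by
  have hx := one_sub_div_nonneg_of_le hin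
  have hx1 : 1 - (i : ℝ) / n ≤ 1 := by linarith [show 0 ≤ (i : ℝ) / n by positivity]
  exact mul_nonneg hT (sub_nonneg.2 (rpow_le_one hx hx1 (div_nonneg zero_le_one (by linarith))))

theorem tnet_le (hT : 0 ≤ T) (hin : i ≤ n) : tnet T η n i ≤ T := by
  have hx := one_sub_div_nonneg_of_le hin
  have : 0 ≤ T - tnet T η n i := by rw [sub_tnet]; positivity
  linarith

theorem tnet_le_tnet_succ (hT : 0 ≤ T) (hη : η < 1) (hi : i + 1 ≤ n) :
    tnet T η n i ≤ tnet T η n (i + 1) := by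
  unfold tnet
  have := one_sub_div_nonneg_of_le hi
  have hp : 0 ≤ (1 : ℝ) / (1 - η) := div_nonneg zero_le_one (by linarith)
  gcongr
  exact i.le_succ

theorem rpow_sub_tnet (hT : 0 ≤ T) (hη : η < 1) (hin : i ≤ n) :
    (T - tnet T η n i) ^ (1 - η) = T ^ (1 - η) * (1 - (i : ℝ) / n) := by
  have hx := one_sub_div_nonneg_of_le hin
  rw [sub_tnet, mul_rpow hT (rpow_nonneg hx _), ← rpow_mul hx,
    one_div_mul_cancel (by linarith), rpow_one]

theorem tnet_succ_sub_le (hT : 0 ≤ T) (hη0 : 0 ≤ η) (hη1 : η < 1) (hi : i + 1 ≤ n) {s : ℝ}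
    (hs : s ∈ Icc (tnet T η n i) (tnet T η n (i + 1))) :
    tnet T η n (i + 1) - s ≤ T ^ (1 - η) / (1 - η) / n * (T - s) ^ η := by
  have ha : 0 ≤ T - tnet T η n (i + 1) := sub_nonneg.2 (tnet_le hT hi)
  have hab : T - tnet T η n (i + 1) ≤ T - s := by linarith [hs.2]
  have hb : T - s ≤ T - tnet T η n i := by linarith [hs.1]
  have hconc := mul_sub_le_rpow_sub_rpow_mul ha hab (by linarith : 0 ≤ 1 - η) (by linarith)
  rw [sub_sub_cancel] at hconc
  have hstep : (T - s) ^ (1 - η) - (T - tnet T η n (i + 1)) ^ (1 - η) ≤ T ^ (1 - η) / n := by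
    have := rpow_le_rpow (ha.trans hab) hb (by linarith : 0 ≤ 1 - η)
    rw [rpow_sub_tnet hT hη1 (by omega)] at this
    rw [rpow_sub_tnet hT hη1 hi]
    push_cast
    linarith [show T ^ (1 - η) * (1 - ((i : ℝ) + 1) / n) = T ^ (1 - η) * (1 - i / n) - T ^ (1 - η) / n
      by ring]
  have : (1 - η) * (tnet T η n (i + 1) - s) ≤ T ^ (1 - η) / n * (T - s) ^ η := calc
    _ = (1 - η) * ((T - s) - (T - tnet T η n (i + 1))) := by ring
    _ ≤ ((T - s) ^ (1 - η) - (T - tnet T η n (i + 1)) ^ (1 - η)) * (T - s) ^ η := hconc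
    _ ≤ T ^ (1 - η) / n * (T - s) ^ η :=
      mul_le_mul_of_nonneg_right hstep (rpow_nonneg (ha.trans hab) _)
  rw [show T ^ (1 - η) / (1 - η) / n * (T - s) ^ η = T ^ (1 - η) / n * (T - s) ^ η / (1 - η)
    by ring, le_div_iff₀ (by linarith)]
  linarith

end tnet

theorem sum_tnet_integral_integral_le {T η : ℝ} (hT : 0 ≤ T) (hη0 : 0 ≤ η) (hη1 : η < 1)
    {f g : ℝ → ℝ} (hfm : Measurable f) (hf0 : ∀ s, 0 ≤ f s) (hg : IntervalIntegrable g volume 0 T)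
    (hfg : ∀ s ∈ Ioo 0 T, (T - s) ^ η * f s ≤ g s) {n : ℕ} (hn : n ≠ 0) :
    ∑ j ∈ Finset.range n, ∫ u in tnet T η n j..tnet T η n (j + 1), ∫ s in tnet T η n j..u, f s
      ≤ T ^ (1 - η) / (1 - η) / n * ∫ s in 0..T, g s := by
  have hcell : ∀ j < n, IntervalIntegrable g volume (tnet T η n j) (tnet T η n (j + 1)) :=
    fun j hj => hg.mono_set <| uIcc_subset_uIcc
      (mem_uIcc_of_le (tnet_nonneg hT hη1 hj.le) (tnet_le hT hj.le))
      (mem_uIcc_of_le (tnet_nonneg hT hη1 hj) (tnet_le hT hj))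
  calc _ ≤ ∑ j ∈ Finset.range n,
        ∫ s in tnet T η n j..tnet T η n (j + 1), T ^ (1 - η) / (1 - η) / n * g s := by
        refine Finset.sum_le_sum fun j hj => ?_
        have hj : j < n := Finset.mem_range.1 hj
        refine integral_integral_le_of_sub_mul_le (tnet_le_tnet_succ hT hη1 hj) hfm hf0
          ((hcell j hj).const_mul _) fun s hs => ?_
        have hs0 : 0 < s := (tnet_nonneg hT hη1 hj.le).trans_lt hs.1
        have hsT : s < T := hs.2.trans_le (tnet_le hT hj)
        have hM : 0 ≤ T ^ (1 - η) / (1 - η) / n :=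
          div_nonneg (div_nonneg (rpow_nonneg hT _) (by linarith)) n.cast_nonneg
        calc (tnet T η n (j + 1) - s) * f s
            ≤ T ^ (1 - η) / (1 - η) / n * (T - s) ^ η * f s :=
              mul_le_mul_of_nonneg_right
                (tnet_succ_sub_le hT hη0 hη1 hj (Ioo_subset_Icc_self hs)) (hf0 s)
          _ ≤ T ^ (1 - η) / (1 - η) / n * g s := by
              rw [mul_assoc]; exact mul_le_mul_of_nonneg_left (hfg s ⟨hs0, hsT⟩) hM
    _ = T ^ (1 - η) / (1 - η) / n * ∫ s in 0..T, g s := by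
        rw [intervalIntegral.sum_integral_adjacent_intervals fun j hj => (hcell j hj).const_mul _,
          tnet_zero, tnet_self hη1 hn, intervalIntegral.integral_const_mul]

theorem stmt0_general (T θ C η : ℝ) (hT : 0 < T) (hC : 0 < C)
    (φ : ℝ → ℝ) (hφm : Measurable φ)
    (hφ0 : ∀ u ∈ Set.Ico (0 : ℝ) T, 0 ≤ φ u)
    (hφ : ∀ u ∈ Set.Ico (0 : ℝ) T, φ u ≤ C * (T - u) ^ (-θ))
    (hη : (θ < 1 / 2 ∧ η = 0) ∨ (1 / 2 ≤ θ ∧ 2 * θ - 1 < η ∧ η < 1)) :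
    ∃ C' > 0, ∀ n : ℕ, 1 ≤ n →
      ∑ i ∈ Finset.Icc 1 n,
        (∫ u in tnet T η n (i - 1)..tnet T η n i,
          (∫ s in tnet T η n (i - 1)..u, (φ s) ^ 2)) ≤ C' / n := by
  obtain ⟨hη0, hη1, hθη⟩ : 0 ≤ η ∧ η < 1 ∧ -1 < η - 2 * θ := by
    rcases hη with ⟨hθ, rfl⟩ | ⟨hθ, h1, h2⟩ <;> refine ⟨?_, ?_, ?_⟩ <;> linarith
  have hbound : ∀ s ∈ Ioo 0 T, (T - s) ^ η * φ s ^ 2 ≤ C ^ 2 * (T - s) ^ (η - 2 * θ) := by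
    intro s hs
    have hs' : s ∈ Ico 0 T := Ioo_subset_Ico_self hs
    have hTs : 0 < T - s := sub_pos.2 hs.2
    calc (T - s) ^ η * φ s ^ 2 ≤ (T - s) ^ η * (C * (T - s) ^ (-θ)) ^ 2 := by
          gcongr
          exacts [hφ0 s hs', hφ s hs']
      _ = C ^ 2 * (T - s) ^ (η - 2 * θ) := by
          rw [mul_pow, ← rpow_mul_natCast hTs.le, mul_left_comm, ← rpow_add hTs]
          ring_nf
  refine ⟨T ^ (1 - η) / (1 - η) * (C ^ 2 * (T ^ (η - 2 * θ + 1) / (η - 2 * θ + 1))), ?_,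
    fun n hn => ?_⟩
  · exact mul_pos (div_pos (rpow_pos_of_pos hT _) (by linarith))
      (mul_pos (pow_pos hC 2) (div_pos (rpow_pos_of_pos hT _) (by linarith)))
  rw [← Finset.Ico_add_one_right_eq_Icc, Finset.sum_Ico_eq_sum_range]
  simp only [add_comm 1, Nat.add_sub_cancel]
  calc _ ≤ T ^ (1 - η) / (1 - η) / n * ∫ s in 0..T, C ^ 2 * (T - s) ^ (η - 2 * θ) :=
        sum_tnet_integral_integral_le hT.le hη0 hη1 (hφm.pow_const 2) (fun s => sq_nonneg _)
          ((intervalIntegrable_sub_rpow hθη T 0 T).const_mul _) hbound (by omega)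
    _ = _ := by rw [intervalIntegral.integral_const_mul, integral_sub_rpow hθη]; ring

/-- Lemma 5.4: for a Borel function `φ : [0,T) → [0,∞)` with
`φ(u) ≤ C (T-u)^{-θ}`, and `η` chosen according to `θ`, one has
`∑_{i=1}^n ∫_{t_{i-1}^η}^{t_i^η} ∫_{t_{i-1}^η}^u φ(s)² ds du ≤ C'/n`. -/
theorem stmt0 (T θ C η : ℝ) (hT : 0 < T) (hθ0 : 0 ≤ θ) (hθ1 : θ < 1) (hC : 0 < C)
    (φ : ℝ → ℝ) (hφm : Measurable φ)
    (hφ0 : ∀ u ∈ Set.Ico (0 : ℝ) T, 0 ≤ φ u)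
    (hφ : ∀ u ∈ Set.Ico (0 : ℝ) T, φ u ≤ C * (T - u) ^ (-θ))
    (hη : (θ < 1 / 2 ∧ η = 0) ∨ (1 / 2 ≤ θ ∧ 2 * θ - 1 < η ∧ η < 1)) :
    ∃ C' > 0, ∀ n : ℕ, 1 ≤ n →
      ∑ i ∈ Finset.Icc 1 n,
        (∫ u in tnet T η n (i - 1)..tnet T η n i,
          (∫ s in tnet T η n (i - 1)..u, (φ s) ^ 2)) ≤ C' / n :=
  stmt0_general T θ C η hT hC φ hφm hφ0 hφ hη
end

section
/- Let d ≥ 1, T > 0, q ≥ 0 and C₀ > 0. Let b̂ : ℝ^d → ℝ^d and A : ℝ^d → ℝ^{d×d} be continuous, and let Γ : (0,T] × ℝ^d × ℝ^d → [0,∞) be infinitely differentiable such that: (i) ∂_s Γ(s,y,ξ) = (1/2) ∑_{k,l=1}^d A_{kl}(y) ∂²_{y_k y_l} Γ(s,y,ξ) + ∑_{i=1}^d b̂_i(y) ∂_{y_i} Γ(s,y,ξ) for all (s,y,ξ) ∈ (0,T] × ℝ^d × ℝ^d; and (ii) for each a ∈ {0,1} and multi-indices b with |b| ≤ 2 there exist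 constants C, D > 0 such that |∂_t^a ∂_y^b Γ(t,y,ξ)| ≤ C t^{−(d + 2a + |b|)/2} exp(−D‖y − ξ‖²/t) for all (t,y,ξ). Let g : ℝ^d → ℝ be Borel-measurable with |g(ξ)| ≤ C₀(1 + ‖ξ‖^q). Then the function G(t,y) := ∫_{ℝ^d} Γ(T−t, y, ξ) g(ξ) dξ is well defined on [0,T) × ℝ^d, is differentiable in t and twice differentiable in y there, and satisfies the backward partial differential equation ∂_t G(t,y) + ∑_{i=1}^d b̂_i(y) ∂_{y_i} G(t,y) + (1/2) ∑_{k,l=1}^d A_{kl}(y) ∂²_{y_k y_l} G(t,y) = 0 for all (t,y) ∈ [0,T) × ℝ^d. -/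
open MeasureTheory Real Set

/-- The partial derivative `∂_{y_i} f(y)` of `f : ℝ^d → ℝ`. -/
noncomputable def pderiv' (d : ℕ) (i : Fin d) (f : EuclideanSpace ℝ (Fin d) → ℝ)
    (y : EuclideanSpace ℝ (Fin d)) : ℝ :=
  fderiv ℝ f y (EuclideanSpace.single i 1)

/-- Iterated partial derivatives `∂_{y_{i_1}} ⋯ ∂_{y_{i_k}} f` indexed by a
list (multi-index) of coordinates. -/
noncomputable def pderivList (d : ℕ) (l : List (Fin d))
    (f : EuclideanSpace ℝ (Fin d) → ℝ) : EuclideanSpace ℝ (Fin d) → ℝ :=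
  l.foldr (fun i g => pderiv' d i g) f


private lemma aux_poly_le_exp {c q : ℝ} (hc : 0 < c) (hq : 0 ≤ q) :
    ∃ K > 0, ∀ r : ℝ, 0 ≤ r → 1 + r ^ q ≤ K * Real.exp (c * r ^ 2) := by
  refine ⟨1 + Real.exp (q ^ 2 / (4 * c)), by positivity, fun r hr => ?_⟩
  have h1 : (1:ℝ) ≤ Real.exp (c * r ^ 2) := by
    rw [Real.one_le_exp_iff]; positivity
  have hE : (1:ℝ) ≤ Real.exp (q ^ 2 / (4 * c)) := by
    rw [Real.one_le_exp_iff]; positivity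
  rcases le_or_gt r 1 with h | h
  · have : r ^ q ≤ 1 := Real.rpow_le_one hr h hq
    nlinarith
  · have hr0 : 0 < r := lt_trans one_pos h
    have hlog : Real.log r ≤ r := (Real.log_le_sub_one_of_pos hr0).trans (by linarith)
    have h2 : r ^ q = Real.exp (q * Real.log r) := by
      rw [← Real.exp_log hr0, ← Real.exp_mul, Real.log_exp, mul_comm]
    have h3 : q * Real.log r ≤ q * r :=
      mul_le_mul_of_nonneg_left hlog hq
    have h4 : q * r ≤ c * r ^ 2 + q ^ 2 / (4 * c) := by
      have hc4 : (0:ℝ) < 4 * c := by linarith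
      have hu : q ^ 2 / (4 * c) * (4 * c) = q ^ 2 := div_mul_cancel₀ _ (ne_of_gt hc4)
      nlinarith [sq_nonneg (2 * c * r - q), hc4, hu]
    have h5 : r ^ q ≤ Real.exp (q ^ 2 / (4 * c)) * Real.exp (c * r ^ 2) := by
      rw [h2, ← Real.exp_add]
      apply Real.exp_le_exp.2
      linarith
    nlinarith [Real.exp_pos (q ^ 2 / (4 * c))]

private lemma aux_gauss_integrable (d : ℕ) {c : ℝ} (hc : 0 < c) (y : EuclideanSpace ℝ (Fin d)) :
    Integrable (fun ξ : EuclideanSpace ℝ (Fin d) => Real.exp (-c * ‖y - ξ‖ ^ 2)) := by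
  have h := (GaussianFourier.integrable_cexp_neg_mul_sq_norm_add_of_euclideanSpace
    (b := (c : ℂ)) (ι := Fin d) (by simpa using hc) ((2 * c : ℝ) : ℂ) y).norm
  have : (fun ξ : EuclideanSpace ℝ (Fin d) => Real.exp (-c * ‖y - ξ‖ ^ 2))
      = fun ξ => Real.exp (-c * ‖y‖ ^ 2) *
        ‖Complex.exp (-(c:ℂ) * (‖ξ‖:ℂ) ^ 2 + ((2 * c : ℝ):ℂ) * ((inner ℝ y ξ : ℝ):ℂ))‖ := by
    funext ξ
    rw [Complex.norm_exp]
    have hre : (-(c:ℂ) * (‖ξ‖:ℂ) ^ 2 + ((2 * c : ℝ):ℂ) * ((inner ℝ y ξ : ℝ):ℂ)).re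
        = -c * ‖ξ‖ ^ 2 + 2 * c * (inner ℝ y ξ : ℝ) := by
      simp [← Complex.ofReal_pow]
    rw [hre, ← Real.exp_add]
    congr 1
    have hexp : ‖y - ξ‖ ^ 2 = ‖y‖ ^ 2 - 2 * (inner ℝ y ξ : ℝ) + ‖ξ‖ ^ 2 := by
      rw [@norm_sub_sq_real]
    nlinarith [hexp]
  rw [this]
  exact h.const_mul _

private lemma aux_int_of_gauss_poly (d : ℕ) {c q C₀ K : ℝ} (hc : 0 < c) (hq : 0 ≤ q)
    (hC₀ : 0 ≤ C₀) (hK : 0 ≤ K) (y : EuclideanSpace ℝ (Fin d))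
    {φ : EuclideanSpace ℝ (Fin d) → ℝ} (hφm : AEStronglyMeasurable φ volume)
    (hφ : ∀ ξ, |φ ξ| ≤ K * Real.exp (-c * ‖y - ξ‖ ^ 2) * (C₀ * (1 + ‖ξ‖ ^ q))) :
    Integrable φ := by
  obtain ⟨M, hM, hMle⟩ := aux_poly_le_exp (c := c / 4) (q := q) (by linarith) hq
  -- 1 + ‖ξ‖^q ≤ M exp((c/4)‖ξ‖²) ≤ M exp((c/2)‖y-ξ‖² + (c/2)‖y‖²)
  have key : ∀ ξ : EuclideanSpace ℝ (Fin d),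
      K * Real.exp (-c * ‖y - ξ‖ ^ 2) * (C₀ * (1 + ‖ξ‖ ^ q))
        ≤ (K * C₀ * M * Real.exp ((c / 2) * ‖y‖ ^ 2)) * Real.exp (-(c / 2) * ‖y - ξ‖ ^ 2) := by
    intro ξ
    have h1 : 1 + ‖ξ‖ ^ q ≤ M * Real.exp ((c / 4) * ‖ξ‖ ^ 2) := hMle _ (norm_nonneg _)
    have h2 : ‖ξ‖ ^ 2 ≤ 2 * ‖y - ξ‖ ^ 2 + 2 * ‖y‖ ^ 2 := by
      have := norm_sub_norm_le (y - ξ) y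
      have h3 : ‖ξ‖ ≤ ‖y - ξ‖ + ‖y‖ := by
        have : ξ = y - (y - ξ) := by abel
        calc ‖ξ‖ = ‖y - (y - ξ)‖ := by rw [← this]
        _ ≤ ‖y‖ + ‖y - ξ‖ := norm_sub_le _ _
        _ = ‖y - ξ‖ + ‖y‖ := by ring
      nlinarith [norm_nonneg (y - ξ), norm_nonneg y, norm_nonneg ξ,
        sq_nonneg (‖y - ξ‖ - ‖y‖), sq_nonneg (‖y - ξ‖ + ‖y‖)]
    have h4 : (c / 4) * ‖ξ‖ ^ 2 ≤ (c / 2) * ‖y - ξ‖ ^ 2 + (c / 2) * ‖y‖ ^ 2 := by nlinarith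
    calc K * Real.exp (-c * ‖y - ξ‖ ^ 2) * (C₀ * (1 + ‖ξ‖ ^ q))
        ≤ K * Real.exp (-c * ‖y - ξ‖ ^ 2) * (C₀ * (M * Real.exp ((c / 4) * ‖ξ‖ ^ 2))) := by
          apply mul_le_mul_of_nonneg_left _ (by positivity)
          exact mul_le_mul_of_nonneg_left h1 hC₀
      _ ≤ K * Real.exp (-c * ‖y - ξ‖ ^ 2) *
            (C₀ * (M * Real.exp ((c / 2) * ‖y - ξ‖ ^ 2 + (c / 2) * ‖y‖ ^ 2))) := by
          apply mul_le_mul_of_nonneg_left _ (by positivity)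
          apply mul_le_mul_of_nonneg_left _ hC₀
          exact mul_le_mul_of_nonneg_left (Real.exp_le_exp.2 h4) (le_of_lt hM)
      _ = (K * C₀ * M * Real.exp ((c / 2) * ‖y‖ ^ 2)) * Real.exp (-(c / 2) * ‖y - ξ‖ ^ 2) := by
          rw [show K * Real.exp (-c * ‖y - ξ‖ ^ 2) *
                (C₀ * (M * Real.exp ((c / 2) * ‖y - ξ‖ ^ 2 + (c / 2) * ‖y‖ ^ 2)))
              = K * C₀ * M * (Real.exp (-c * ‖y - ξ‖ ^ 2) *
                Real.exp ((c / 2) * ‖y - ξ‖ ^ 2 + (c / 2) * ‖y‖ ^ 2)) from by ring,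
             ← Real.exp_add]
          rw [show -c * ‖y - ξ‖ ^ 2 + ((c / 2) * ‖y - ξ‖ ^ 2 + (c / 2) * ‖y‖ ^ 2)
              = (c / 2) * ‖y‖ ^ 2 + -(c / 2) * ‖y - ξ‖ ^ 2 from by ring, Real.exp_add]
          ring
  refine Integrable.mono' (((aux_gauss_integrable d (by linarith : (0:ℝ) < c / 2) y).const_mul
    (K * C₀ * M * Real.exp ((c / 2) * ‖y‖ ^ 2)))) hφm ?_
  filter_upwards with ξ
  exact (hφ ξ).trans (key ξ)

private lemma aux_opnorm_le_sum {d : ℕ} (L : EuclideanSpace ℝ (Fin d) →L[ℝ] ℝ) :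
    ‖L‖ ≤ ∑ i, |L (EuclideanSpace.single i 1)| := by
  refine L.opNorm_le_bound (Finset.sum_nonneg fun i _ => abs_nonneg _) (fun x => ?_)
  have hx : x = ∑ i, x i • EuclideanSpace.single i (1:ℝ) := by
    have := (EuclideanSpace.basisFun (Fin d) ℝ).sum_repr x
    simp only [EuclideanSpace.basisFun_repr, EuclideanSpace.basisFun_apply] at this
    exact this.symm
  calc ‖L x‖ = ‖L (∑ i, x i • EuclideanSpace.single i (1:ℝ))‖ := by rw [← hx]
    _ = ‖∑ i, x i • L (EuclideanSpace.single i (1:ℝ))‖ := by rw [map_sum]; simp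
    _ ≤ ∑ i, ‖x i • L (EuclideanSpace.single i (1:ℝ))‖ := norm_sum_le _ _
    _ ≤ ∑ i, |L (EuclideanSpace.single i 1)| * ‖x‖ := by
        apply Finset.sum_le_sum
        intro i _
        rw [norm_smul]
        rw [mul_comm]
        apply mul_le_mul_of_nonneg_left _ (norm_nonneg _)
        calc ‖x i‖ = |x i| := rfl
          _ ≤ ‖x‖ := by
            rw [EuclideanSpace.norm_eq]
            have h1 : |x i| = Real.sqrt ((x i) ^ 2) := (Real.sqrt_sq_eq_abs _).symm
            rw [h1]
            apply Real.sqrt_le_sqrt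
            have h2 : (x i) ^ 2 = ‖x i‖ ^ 2 := by rw [Real.norm_eq_abs, sq_abs]
            rw [h2]
            exact Finset.single_le_sum (f := fun j => ‖x j‖ ^ 2)
              (fun j _ => sq_nonneg _) (Finset.mem_univ i)
    _ = (∑ i, |L (EuclideanSpace.single i 1)|) * ‖x‖ := by rw [Finset.sum_mul]

private lemma aux_hasDerivWithinAt_integral {α : Type*} [MeasurableSpace α] {μ : Measure α}
    {F : ℝ → α → ℝ} {F' : α → ℝ} {s : Set ℝ} {x : ℝ} {bound : α → ℝ}
    (hx : x ∈ s) (hne : (nhdsWithin x (s \ {x})).NeBot)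
    (hmeas : ∀ t ∈ s, AEStronglyMeasurable (F t) μ)
    (hint : Integrable (F x) μ)
    (hF'meas : AEStronglyMeasurable F' μ)
    (hbound_int : Integrable bound μ)
    (hlip : ∀ t ∈ s, ∀ a, |F t a - F x a| ≤ bound a * |t - x|)
    (hderiv : ∀ a, HasDerivWithinAt (fun t => F t a) (F' a) s x) :
    Integrable F' μ ∧
      HasDerivWithinAt (fun t => ∫ a, F t a ∂μ) (∫ a, F' a ∂μ) s x := by
  set l := nhdsWithin x (s \ {x}) with hl
  have hslope_bd : ∀ a, ∀ t ∈ s \ {x}, |slope (fun u => F u a) x t| ≤ bound a := by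
    intro a t ht
    have hxne : t - x ≠ 0 := sub_ne_zero.2 ht.2
    rw [slope_def_field, abs_div]
    rw [div_le_iff₀ (abs_pos.2 hxne)]
    exact hlip t ht.1 a
  have hbd : ∀ a, |F' a| ≤ bound a := by
    intro a
    have h1 : Filter.Tendsto (slope (fun u => F u a) x) l (nhds (F' a)) :=
      hasDerivWithinAt_iff_tendsto_slope.1 (hderiv a)
    have h2 : ∀ᶠ t in l, |slope (fun u => F u a) x t| ≤ bound a := by
      filter_upwards [self_mem_nhdsWithin] with t ht
      exact hslope_bd a t ht
    exact le_of_tendsto h1.abs h2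
  have hF'int : Integrable F' μ :=
    hbound_int.mono' hF'meas (Filter.Eventually.of_forall (fun a => by
      simpa [Real.norm_eq_abs] using hbd a))
  have hFint : ∀ t ∈ s, Integrable (F t) μ := by
    intro t ht
    refine (hint.abs.add (hbound_int.mul_const |t - x|)).mono' (hmeas t ht)
      (Filter.Eventually.of_forall (fun a => ?_))
    have := hlip t ht a
    have h3 : |F t a| - |F x a| ≤ |F t a - F x a| := abs_sub_abs_le_abs_sub _ _
    simp only [Real.norm_eq_abs, Pi.add_apply]
    linarith
  have key : Filter.Tendsto (fun t => ∫ a, slope (fun u => F u a) x t ∂μ) l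
      (nhds (∫ a, F' a ∂μ)) := by
    apply tendsto_integral_filter_of_dominated_convergence bound
    · filter_upwards [self_mem_nhdsWithin] with t ht
      have : (fun a => slope (fun u => F u a) x t)
          = fun a => (F t a - F x a) * (t - x)⁻¹ := by
        funext a; rw [slope_def_field, div_eq_mul_inv]
      rw [this]
      exact ((hmeas t ht.1).sub (hmeas x hx)).mul_const _
    · filter_upwards [self_mem_nhdsWithin] with t ht
      exact Filter.Eventually.of_forall (fun a => by
        simpa [Real.norm_eq_abs] using hslope_bd a t ht)
    · exact hbound_int
    · exact Filter.Eventually.of_forall (fun a =>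
        hasDerivWithinAt_iff_tendsto_slope.1 (hderiv a))
  refine ⟨hF'int, ?_⟩
  rw [hasDerivWithinAt_iff_tendsto_slope]
  refine key.congr' ?_
  filter_upwards [self_mem_nhdsWithin] with t ht
  rw [slope_def_field, ← integral_sub (hFint t ht.1) hint, ← integral_div]
  congr 1
  funext a
  rw [slope_def_field]

set_option maxHeartbeats 2000000
set_option synthInstance.maxHeartbeats 1000000

/-- If `Γ` is a smooth kernel on `(0,T] × ℝ^d × ℝ^d` satisfying (i) the
Kolmogorov backward equation `∂_s Γ = ½ ∑ A_{kl} ∂²_{y_k y_l} Γ + ∑ b̂_i ∂_{y_i} Γ`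
and (ii) Gaussian bounds `|∂_t^a ∂_y^b Γ(t,y,ξ)| ≤ C t^{-(d+2a+|b|)/2} e^{-D‖y-ξ‖²/t}`
for `a ≤ 1`, `|b| ≤ 2`, and if `g` is Borel with `|g(ξ)| ≤ C₀ (1 + ‖ξ‖^q)`, then
`G(t,y) = ∫ Γ(T-t,y,ξ) g(ξ) dξ` is well defined on `[0,T) × ℝ^d`, differentiable
in `t`, twice differentiable in `y`, and satisfies the backward PDE
`∂_t G + ∑ b̂_i ∂_{y_i} G + ½ ∑ A_{kl} ∂²_{y_k y_l} G = 0` there. -/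
theorem stmt5 (d : ℕ) (hd : 1 ≤ d) (T q C₀ : ℝ) (hT : 0 < T) (hq : 0 ≤ q) (hC₀ : 0 < C₀)
    (bhat : EuclideanSpace ℝ (Fin d) → Fin d → ℝ)
    (A : EuclideanSpace ℝ (Fin d) → Fin d → Fin d → ℝ)
    (hbcont : Continuous bhat) (hAcont : Continuous A)
    (Γ : ℝ → EuclideanSpace ℝ (Fin d) → EuclideanSpace ℝ (Fin d) → ℝ)
    (hΓ0 : ∀ s ∈ Set.Ioc 0 T, ∀ y ξ, 0 ≤ Γ s y ξ)
    (hΓsmooth : ContDiffOn ℝ (⊤ : ℕ∞)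
      (fun p : ℝ × EuclideanSpace ℝ (Fin d) × EuclideanSpace ℝ (Fin d) => Γ p.1 p.2.1 p.2.2)
      (Set.Ioc 0 T ×ˢ (Set.univ ×ˢ Set.univ)))
    (hPDE : ∀ s ∈ Set.Ioc 0 T, ∀ y ξ,
      derivWithin (fun s' => Γ s' y ξ) (Set.Ioc 0 T) s
        = (1 / 2) * ∑ k, ∑ l, A y k l *
            pderiv' d k (fun y' => pderiv' d l (fun y'' => Γ s y'' ξ) y') y
          + ∑ i, bhat y i * pderiv' d i (fun y' => Γ s y' ξ) y)
    (hGauss : ∀ a : ℕ, a ≤ 1 → ∀ l : List (Fin d), l.length ≤ 2 →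
      ∃ C > 0, ∃ D > 0, ∀ t ∈ Set.Ioc 0 T, ∀ y ξ,
        |deriv^[a] (fun t' => pderivList d l (fun y' => Γ t' y' ξ) y) t|
          ≤ C * t ^ (-((d : ℝ) + 2 * a + l.length) / 2) *
              Real.exp (-D * ‖y - ξ‖ ^ 2 / t))
    (g : EuclideanSpace ℝ (Fin d) → ℝ) (hgm : Measurable g)
    (hgbd : ∀ ξ, |g ξ| ≤ C₀ * (1 + ‖ξ‖ ^ q)) :
    ∀ t ∈ Set.Ico 0 T, ∀ y : EuclideanSpace ℝ (Fin d),
      Integrable (fun ξ => Γ (T - t) y ξ * g ξ) ∧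
      DifferentiableWithinAt ℝ (fun t' => ∫ ξ, Γ (T - t') y ξ * g ξ) (Set.Ico 0 T) t ∧
      DifferentiableAt ℝ (fun y' => ∫ ξ, Γ (T - t) y' ξ * g ξ) y ∧
      (∀ i : Fin d,
        DifferentiableAt ℝ (fun y' => pderiv' d i (fun y'' => ∫ ξ, Γ (T - t) y'' ξ * g ξ) y') y) ∧
      derivWithin (fun t' => ∫ ξ, Γ (T - t') y ξ * g ξ) (Set.Ico 0 T) t
        + ∑ i, bhat y i * pderiv' d i (fun y' => ∫ ξ, Γ (T - t) y' ξ * g ξ) y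
        + (1 / 2) * ∑ k, ∑ l, A y k l *
            pderiv' d k (fun y' => pderiv' d l (fun y'' => ∫ ξ, Γ (T - t) y'' ξ * g ξ) y') y
        = 0 := by
  have hS : UniqueDiffOn ℝ ((Set.Ioc (0:ℝ) T) ×ˢ
      ((Set.univ : Set (EuclideanSpace ℝ (Fin d))) ×ˢ (Set.univ : Set (EuclideanSpace ℝ (Fin d))))) :=
    (uniqueDiffOn_Ioc 0 T).prod (uniqueDiffOn_univ.prod uniqueDiffOn_univ)
  have hu : ∀ s ∈ Set.Ioc (0:ℝ) T, ContDiff ℝ (⊤ : ℕ∞)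
      (fun p : EuclideanSpace ℝ (Fin d) × EuclideanSpace ℝ (Fin d) => Γ s p.1 p.2) := by
    intro s hs
    rw [← contDiffOn_univ]
    exact hΓsmooth.comp ((contDiff_const.prodMk contDiff_id).contDiffOn)
      (fun p _ => ⟨hs, Set.mem_univ _, Set.mem_univ _⟩)
  -- time-slice smoothness
  have htime : ∀ (yy ξ : EuclideanSpace ℝ (Fin d)),
      ContDiffOn ℝ (⊤ : ℕ∞) (fun s => Γ s yy ξ) (Set.Ioc 0 T) := by
    intro yy ξ
    exact hΓsmooth.comp ((contDiff_id.prodMk (contDiff_const.prodMk contDiff_const)).contDiffOn)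
      (fun s hs => ⟨hs, Set.mem_univ _, Set.mem_univ _⟩)
  intro t ht y
  have hs0 : T - t ∈ Set.Ioc (0:ℝ) T := ⟨by linarith [ht.2], by linarith [ht.1]⟩
  have hu0 : ContDiff ℝ (⊤ : ℕ∞)
      (fun p : EuclideanSpace ℝ (Fin d) × EuclideanSpace ℝ (Fin d) => Γ (T - t) p.1 p.2) :=
    hu _ hs0
  set J : EuclideanSpace ℝ (Fin d) →L[ℝ]
      (EuclideanSpace ℝ (Fin d) × EuclideanSpace ℝ (Fin d)) :=
    (ContinuousLinearMap.id ℝ (EuclideanSpace ℝ (Fin d))).prod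
      (0 : EuclideanSpace ℝ (Fin d) →L[ℝ] EuclideanSpace ℝ (Fin d)) with hJdef
  set W1 : EuclideanSpace ℝ (Fin d) × EuclideanSpace ℝ (Fin d) →
      (EuclideanSpace ℝ (Fin d) →L[ℝ] ℝ) :=
    fun p => (fderiv ℝ (fun p' : EuclideanSpace ℝ (Fin d) × EuclideanSpace ℝ (Fin d) =>
      Γ (T - t) p'.1 p'.2) p).comp J with hW1def
  have hJd : ∀ (ξ z : EuclideanSpace ℝ (Fin d)),
      HasFDerivAt (fun y' : EuclideanSpace ℝ (Fin d) => (y', ξ)) J z := by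
    intro ξ z
    exact (hasFDerivAt_id z).prodMk (hasFDerivAt_const ξ z)
  have hW1 : ∀ (ξ z : EuclideanSpace ℝ (Fin d)),
      HasFDerivAt (fun y' => Γ (T - t) y' ξ) (W1 (z, ξ)) z := by
    intro ξ z
    exact ((hu0.differentiable (by simp) _).hasFDerivAt).comp z (hJd ξ z)
  have hW1smooth : ContDiff ℝ (⊤ : ℕ∞) W1 :=
    (hu0.fderiv_right (by simp)).clm_comp contDiff_const
  set v : Fin d → EuclideanSpace ℝ (Fin d) × EuclideanSpace ℝ (Fin d) → ℝ :=
    fun l p => W1 p (EuclideanSpace.single l 1) with hvdef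
  have hv_smooth : ∀ l, ContDiff ℝ (⊤ : ℕ∞) (v l) := fun l => hW1smooth.clm_apply contDiff_const
  have hv_eq : ∀ (l : Fin d) (ξ z : EuclideanSpace ℝ (Fin d)),
      pderiv' d l (fun y'' => Γ (T - t) y'' ξ) z = v l (z, ξ) := by
    intro l ξ z
    show fderiv ℝ (fun y'' => Γ (T - t) y'' ξ) z (EuclideanSpace.single l 1) = _
    rw [(hW1 ξ z).fderiv]
  set W2 : Fin d → EuclideanSpace ℝ (Fin d) × EuclideanSpace ℝ (Fin d) →
      (EuclideanSpace ℝ (Fin d) →L[ℝ] ℝ) :=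
    fun l p => (fderiv ℝ (v l) p).comp J with hW2def
  have hW2 : ∀ (l : Fin d) (ξ z : EuclideanSpace ℝ (Fin d)),
      HasFDerivAt (fun y' => v l (y', ξ)) (W2 l (z, ξ)) z := by
    intro l ξ z
    exact (((hv_smooth l).differentiable (by simp) _).hasFDerivAt).comp z (hJd ξ z)
  have hW2smooth : ∀ l, ContDiff ℝ (⊤ : ℕ∞) (W2 l) := fun l =>
    ((hv_smooth l).fderiv_right (by simp)).clm_comp contDiff_const
  have h2nd' : ∀ (k l : Fin d) (ξ z : EuclideanSpace ℝ (Fin d)),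
      pderiv' d k (fun y' => v l (y', ξ)) z = W2 l (z, ξ) (EuclideanSpace.single k 1) := by
    intro k l ξ z
    show fderiv ℝ (fun y' => v l (y', ξ)) z (EuclideanSpace.single k 1) = _
    rw [(hW2 l ξ z).fderiv]
  have h2nd : ∀ (k l : Fin d) (ξ z : EuclideanSpace ℝ (Fin d)),
      pderiv' d k (fun y' => pderiv' d l (fun y'' => Γ (T - t) y'' ξ) y') z
        = W2 l (z, ξ) (EuclideanSpace.single k 1) := by
    intro k l ξ z
    have he : (fun y' => pderiv' d l (fun y'' => Γ (T - t) y'' ξ) y')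
        = fun y' => v l (y', ξ) := funext (fun y' => hv_eq l ξ y')
    show fderiv ℝ (fun y' => pderiv' d l (fun y'' => Γ (T - t) y'' ξ) y') z
        (EuclideanSpace.single k 1) = _
    rw [he, (hW2 l ξ z).fderiv]
  -- clean Gaussian bounds
  obtain ⟨C0, hC0p, D0, hD0p, hB0raw⟩ := hGauss 0 (by norm_num) [] (by norm_num)
  have hB0 : ∀ s ∈ Set.Ioc (0:ℝ) T, ∀ z ξ, |Γ s z ξ|
      ≤ C0 * s ^ (-((d:ℝ)/2)) * Real.exp (-D0 * ‖z - ξ‖ ^ 2 / s) := by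
    intro s hs z ξ
    have h2 := hB0raw s hs z ξ
    simp only [Function.iterate_zero, id_eq, List.length_nil, Nat.cast_zero, mul_zero,
      add_zero, neg_div] at h2
    exact h2
  have hg1 : ∀ l : Fin d, ∃ C, 0 < C ∧ ∃ D, 0 < D ∧ ∀ s ∈ Set.Ioc (0:ℝ) T, ∀ z ξ,
      |pderiv' d l (fun y'' => Γ s y'' ξ) z|
        ≤ C * s ^ (-(((d:ℝ) + 1)/2)) * Real.exp (-D * ‖z - ξ‖ ^ 2 / s) := by
    intro l
    obtain ⟨C, hC, D, hD, h⟩ := hGauss 0 (by norm_num) [l] (by norm_num)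
    refine ⟨C, hC, D, hD, fun s hs z ξ => ?_⟩
    have h2 := h s hs z ξ
    simp only [Function.iterate_zero, id_eq, List.length_cons, List.length_nil, Nat.cast_zero,
      Nat.cast_one, mul_zero, add_zero, zero_add, neg_div] at h2
    exact h2
  choose C1 hC1p D1 hD1p hB1 using hg1
  have hg2 : ∀ k l : Fin d, ∃ C, 0 < C ∧ ∃ D, 0 < D ∧ ∀ s ∈ Set.Ioc (0:ℝ) T, ∀ z ξ,
      |pderiv' d k (fun y' => pderiv' d l (fun y'' => Γ s y'' ξ) y') z|
        ≤ C * s ^ (-(((d:ℝ) + 2)/2)) * Real.exp (-D * ‖z - ξ‖ ^ 2 / s) := by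
    intro k l
    obtain ⟨C, hC, D, hD, h⟩ := hGauss 0 (by norm_num) [k, l] (by norm_num)
    refine ⟨C, hC, D, hD, fun s hs z ξ => ?_⟩
    have h2 := h s hs z ξ
    simp only [Function.iterate_zero, id_eq, List.length_cons, List.length_nil, Nat.cast_zero,
      Nat.cast_one, Nat.cast_ofNat, mul_zero, add_zero, zero_add, neg_div] at h2
    exact h2
  choose C2 hC2p D2 hD2p hB2 using hg2
  obtain ⟨Ct, hCtp, Dt, hDtp, hBtraw⟩ := hGauss 1 le_rfl [] (by norm_num)
  have hBt : ∀ s ∈ Set.Ioc (0:ℝ) T, ∀ z ξ, |deriv (fun s' => Γ s' z ξ) s|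
      ≤ Ct * s ^ (-(((d:ℝ) + 2)/2)) * Real.exp (-Dt * ‖z - ξ‖ ^ 2 / s) := by
    intro s hs z ξ
    have h2 := hBtraw s hs z ξ
    simp only [Function.iterate_one, List.length_nil, Nat.cast_zero, Nat.cast_one,
      mul_one, add_zero, neg_div] at h2
    exact h2
  -- integrability toolkit
  have hgen_int : ∀ (K D : ℝ), 0 ≤ K → 0 < D → ∀ (z : EuclideanSpace ℝ (Fin d))
      (φ : EuclideanSpace ℝ (Fin d) → ℝ), AEStronglyMeasurable φ volume →
      (∀ ξ, |φ ξ| ≤ K * Real.exp (-D * ‖z - ξ‖ ^ 2) * |g ξ|) → Integrable φ := by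
    intro K D hK hD z φ hm hb
    refine aux_int_of_gauss_poly d hD hq (le_of_lt hC₀) hK z hm (fun ξ => (hb ξ).trans ?_)
    exact mul_le_mul_of_nonneg_left (hgbd ξ) (by positivity)
  have hterm_int : ∀ (K D : ℝ), 0 ≤ K → 0 < D → ∀ z : EuclideanSpace ℝ (Fin d),
      Integrable (fun ξ => K * Real.exp (-D * ‖z - ξ‖ ^ 2) * |g ξ|) := by
    intro K D hK hD z
    apply hgen_int K D hK hD z
    · apply AEStronglyMeasurable.mul _ hgm.abs.aestronglyMeasurable
      apply Continuous.aestronglyMeasurable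
      exact continuous_const.mul (Real.continuous_exp.comp
        ((continuous_const.mul (((continuous_const.sub continuous_id).norm).pow 2))))
    · intro ξ
      rw [abs_of_nonneg (by positivity)]
  have hcontΓ : ∀ s ∈ Set.Ioc (0:ℝ) T, ∀ z, Continuous (fun ξ => Γ s z ξ) := by
    intro s hs z
    exact (hu s hs).continuous.comp (continuous_const.prodMk continuous_id)
  have hmeas0 : ∀ s ∈ Set.Ioc (0:ℝ) T, ∀ z,
      AEStronglyMeasurable (fun ξ => Γ s z ξ * g ξ) volume := by
    intro s hs z
    exact (hcontΓ s hs z).aestronglyMeasurable.mul hgm.aestronglyMeasurable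
  have hInt0 : ∀ s ∈ Set.Ioc (0:ℝ) T, ∀ z, Integrable (fun ξ => Γ s z ξ * g ξ) := by
    intro s hs z
    have hs1 : 0 < s := hs.1
    refine hgen_int (C0 * s ^ (-((d:ℝ)/2))) (D0 / s) (by positivity) (by positivity) z _
      (hmeas0 s hs z) (fun ξ => ?_)
    calc |Γ s z ξ * g ξ| = |Γ s z ξ| * |g ξ| := abs_mul _ _
      _ ≤ C0 * s ^ (-((d:ℝ)/2)) * Real.exp (-D0 * ‖z - ξ‖ ^ 2 / s) * |g ξ| :=
          mul_le_mul_of_nonneg_right (hB0 s hs z ξ) (abs_nonneg _)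
      _ = C0 * s ^ (-((d:ℝ)/2)) * Real.exp (-(D0 / s) * ‖z - ξ‖ ^ 2) * |g ξ| := by
          rw [show -D0 * ‖z - ξ‖ ^ 2 / s = -(D0 / s) * ‖z - ξ‖ ^ 2 from by ring]
  -- ball-uniform exponential comparison
  have hball : ∀ (D s : ℝ), 0 < D → 0 < s → ∀ (z z' ξ : EuclideanSpace ℝ (Fin d)),
      z' ∈ Metric.ball z 1 →
      Real.exp (-D * ‖z' - ξ‖ ^ 2 / s)
        ≤ Real.exp (D / s) * Real.exp (-(D / (2 * s)) * ‖z - ξ‖ ^ 2) := by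
    intro D s hD hs z z' ξ hz'
    rw [← Real.exp_add]
    apply Real.exp_le_exp.2
    have hzz : ‖z - z'‖ ≤ 1 := by
      have := Metric.mem_ball.1 hz'
      rw [dist_eq_norm] at this
      rw [norm_sub_rev]
      linarith
    have htri : ‖z - ξ‖ ≤ ‖z - z'‖ + ‖z' - ξ‖ := by
      have : z - ξ = (z - z') + (z' - ξ) := by abel
      rw [this]; exact norm_add_le _ _
    have hsq : ‖z - ξ‖ ^ 2 ≤ 2 * ‖z' - ξ‖ ^ 2 + 2 := by
      nlinarith [norm_nonneg (z - ξ), norm_nonneg (z - z'), norm_nonneg (z' - ξ),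
        sq_nonneg (‖z - z'‖ - ‖z' - ξ‖)]
    have key : -D * ‖z' - ξ‖ ^ 2 ≤ D + -(D / 2) * ‖z - ξ‖ ^ 2 := by nlinarith
    calc -D * ‖z' - ξ‖ ^ 2 / s ≤ (D + -(D / 2) * ‖z - ξ‖ ^ 2) / s := by
          exact (div_le_div_iff_of_pos_right hs).2 key
      _ = D / s + -(D / (2 * s)) * ‖z - ξ‖ ^ 2 := by field_simp
  have hs1 : (0:ℝ) < T - t := hs0.1
  have hvcont : ∀ (l : Fin d) z, Continuous (fun ξ => v l (z, ξ)) := fun l z =>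
    (hv_smooth l).continuous.comp (continuous_const.prodMk continuous_id)
  -- bound for W1 on ball
  have hW1bd : ∀ (z z' : EuclideanSpace ℝ (Fin d)), z' ∈ Metric.ball z 1 → ∀ ξ,
      ‖W1 (z', ξ)‖ ≤ ∑ l, (C1 l * (T - t) ^ (-(((d:ℝ) + 1)/2)) * Real.exp (D1 l / (T - t)))
        * Real.exp (-(D1 l / (2 * (T - t))) * ‖z - ξ‖ ^ 2) := by
    intro z z' hz' ξ
    refine (aux_opnorm_le_sum _).trans (Finset.sum_le_sum (fun l _ => ?_))
    have h1 : |W1 (z', ξ) (EuclideanSpace.single l 1)|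
        = |pderiv' d l (fun y'' => Γ (T - t) y'' ξ) z'| := by rw [hv_eq l ξ z']
    rw [h1]
    refine (hB1 l (T - t) hs0 z' ξ).trans ?_
    rw [mul_assoc (C1 l * (T - t) ^ (-(((d:ℝ) + 1)/2)))]
    exact mul_le_mul_of_nonneg_left (hball (D1 l) (T - t) (hD1p l) hs1 z z' ξ hz')
      (le_of_lt (mul_pos (hC1p l) (Real.rpow_pos_of_pos hs1 _)))
  have hbound1_int : ∀ z : EuclideanSpace ℝ (Fin d), Integrable (fun ξ =>
      (∑ l, (C1 l * (T - t) ^ (-(((d:ℝ) + 1)/2)) * Real.exp (D1 l / (T - t)))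
        * Real.exp (-(D1 l / (2 * (T - t))) * ‖z - ξ‖ ^ 2)) * |g ξ|) := by
    intro z
    have : (fun ξ => (∑ l, (C1 l * (T - t) ^ (-(((d:ℝ) + 1)/2)) * Real.exp (D1 l / (T - t)))
        * Real.exp (-(D1 l / (2 * (T - t))) * ‖z - ξ‖ ^ 2)) * |g ξ|)
        = fun ξ => ∑ l, ((C1 l * (T - t) ^ (-(((d:ℝ) + 1)/2)) * Real.exp (D1 l / (T - t)))
          * Real.exp (-(D1 l / (2 * (T - t))) * ‖z - ξ‖ ^ 2)) * |g ξ| := by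
      funext ξ; rw [Finset.sum_mul]
    rw [this]
    refine integrable_finset_sum _ (fun l _ => hterm_int _ _ ?_ ?_ z)
    · exact le_of_lt (mul_pos (mul_pos (hC1p l) (Real.rpow_pos_of_pos hs1 _))
        (Real.exp_pos _))
    · exact div_pos (hD1p l) (by linarith)
  have hF'1meas : ∀ z : EuclideanSpace ℝ (Fin d),
      AEStronglyMeasurable (fun ξ => g ξ • W1 (z, ξ)) volume := by
    intro z
    exact hgm.aestronglyMeasurable.smul
      ((hW1smooth.continuous.comp (continuous_const.prodMk continuous_id)).aestronglyMeasurable)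
  have step1 : ∀ z : EuclideanSpace ℝ (Fin d),
      HasFDerivAt (fun w => ∫ ξ, Γ (T - t) w ξ * g ξ) (∫ ξ, g ξ • W1 (z, ξ)) z := by
    intro z
    apply hasFDerivAt_integral_of_dominated_of_fderiv_le (𝕜 := ℝ)
      (F := fun w ξ => Γ (T - t) w ξ * g ξ) (F' := fun w ξ => g ξ • W1 (w, ξ))
      (bound := fun ξ => (∑ l, (C1 l * (T - t) ^ (-(((d:ℝ) + 1)/2)) * Real.exp (D1 l / (T - t)))
        * Real.exp (-(D1 l / (2 * (T - t))) * ‖z - ξ‖ ^ 2)) * |g ξ|) (s := Metric.ball z 1) (Metric.ball_mem_nhds z one_pos)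
    · exact Filter.Eventually.of_forall (fun w => hmeas0 _ hs0 w)
    · exact hInt0 _ hs0 z
    · exact hF'1meas z
    · refine Filter.Eventually.of_forall (fun ξ => fun w hw => ?_)
      rw [show ‖g ξ • W1 (w, ξ)‖ = |g ξ| * ‖W1 (w, ξ)‖ from by
        have := norm_smul (g ξ) (W1 (w, ξ)); exact this, mul_comm]
      exact mul_le_mul_of_nonneg_right (hW1bd z w hw ξ) (abs_nonneg _)
    · exact hbound1_int z
    · exact Filter.Eventually.of_forall (fun ξ => fun w hw => (hW1 ξ w).mul_const (g ξ))
  have hIntW1 : ∀ z : EuclideanSpace ℝ (Fin d),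
      Integrable (fun ξ => g ξ • W1 (z, ξ)) := by
    intro z
    refine (hbound1_int z).mono' (hF'1meas z) (Filter.Eventually.of_forall (fun ξ => ?_))
    rw [show ‖g ξ • W1 (z, ξ)‖ = |g ξ| * ‖W1 (z, ξ)‖ from by
      have := norm_smul (g ξ) (W1 (z, ξ)); exact this, mul_comm]
    exact mul_le_mul_of_nonneg_right (hW1bd z z (Metric.mem_ball_self one_pos) ξ)
      (abs_nonneg _)
  have hpd1 : ∀ (i : Fin d) (z : EuclideanSpace ℝ (Fin d)),
      pderiv' d i (fun w => ∫ ξ, Γ (T - t) w ξ * g ξ) z = ∫ ξ, g ξ * v i (z, ξ) := by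
    intro i z
    show fderiv ℝ (fun w => ∫ ξ, Γ (T - t) w ξ * g ξ) z (EuclideanSpace.single i 1) = _
    rw [(step1 z).fderiv, ContinuousLinearMap.integral_apply (hIntW1 z)]
    rfl
  have hW2bd : ∀ (l : Fin d) (z z' : EuclideanSpace ℝ (Fin d)), z' ∈ Metric.ball z 1 → ∀ ξ,
      ‖W2 l (z', ξ)‖ ≤ ∑ k, (C2 k l * (T - t) ^ (-(((d:ℝ) + 2)/2)) * Real.exp (D2 k l / (T - t)))
        * Real.exp (-(D2 k l / (2 * (T - t))) * ‖z - ξ‖ ^ 2) := by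
    intro l z z' hz' ξ
    refine (aux_opnorm_le_sum _).trans (Finset.sum_le_sum (fun k _ => ?_))
    have h1 : |W2 l (z', ξ) (EuclideanSpace.single k 1)|
        = |pderiv' d k (fun y' => pderiv' d l (fun y'' => Γ (T - t) y'' ξ) y') z'| := by
      rw [h2nd k l ξ z']
    rw [h1]
    refine (hB2 k l (T - t) hs0 z' ξ).trans ?_
    rw [mul_assoc (C2 k l * (T - t) ^ (-(((d:ℝ) + 2)/2)))]
    exact mul_le_mul_of_nonneg_left (hball (D2 k l) (T - t) (hD2p k l) hs1 z z' ξ hz')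
      (le_of_lt (mul_pos (hC2p k l) (Real.rpow_pos_of_pos hs1 _)))
  have hbound2_int : ∀ (l : Fin d) (z : EuclideanSpace ℝ (Fin d)), Integrable (fun ξ =>
      (∑ k, (C2 k l * (T - t) ^ (-(((d:ℝ) + 2)/2)) * Real.exp (D2 k l / (T - t)))
        * Real.exp (-(D2 k l / (2 * (T - t))) * ‖z - ξ‖ ^ 2)) * |g ξ|) := by
    intro l z
    have : (fun ξ => (∑ k, (C2 k l * (T - t) ^ (-(((d:ℝ) + 2)/2)) * Real.exp (D2 k l / (T - t)))
        * Real.exp (-(D2 k l / (2 * (T - t))) * ‖z - ξ‖ ^ 2)) * |g ξ|)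
        = fun ξ => ∑ k, ((C2 k l * (T - t) ^ (-(((d:ℝ) + 2)/2)) * Real.exp (D2 k l / (T - t)))
          * Real.exp (-(D2 k l / (2 * (T - t))) * ‖z - ξ‖ ^ 2)) * |g ξ| := by
      funext ξ; rw [Finset.sum_mul]
    rw [this]
    refine integrable_finset_sum _ (fun k _ => hterm_int _ _ ?_ ?_ z)
    · exact le_of_lt (mul_pos (mul_pos (hC2p k l) (Real.rpow_pos_of_pos hs1 _))
        (Real.exp_pos _))
    · exact div_pos (hD2p k l) (by linarith)
  have hF'2meas : ∀ (l : Fin d) (z : EuclideanSpace ℝ (Fin d)),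
      AEStronglyMeasurable (fun ξ => g ξ • W2 l (z, ξ)) volume := by
    intro l z
    exact hgm.aestronglyMeasurable.smul
      (((hW2smooth l).continuous.comp (continuous_const.prodMk continuous_id)).aestronglyMeasurable)
  have hInt1 : ∀ (l : Fin d) (z : EuclideanSpace ℝ (Fin d)),
      Integrable (fun ξ => g ξ * v l (z, ξ)) := by
    intro l z
    refine hgen_int (C1 l * (T - t) ^ (-(((d:ℝ) + 1)/2))) (D1 l / (T - t))
      (le_of_lt (mul_pos (hC1p l) (Real.rpow_pos_of_pos hs1 _)))
      (div_pos (hD1p l) hs1) z _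
      (hgm.aestronglyMeasurable.mul (hvcont l z).aestronglyMeasurable) (fun ξ => ?_)
    have h1 : |g ξ * v l (z, ξ)| = |v l (z, ξ)| * |g ξ| := by rw [abs_mul, mul_comm]
    rw [h1]
    refine mul_le_mul_of_nonneg_right ?_ (abs_nonneg _)
    have h2 : |v l (z, ξ)| = |pderiv' d l (fun y'' => Γ (T - t) y'' ξ) z| := by
      rw [hv_eq l ξ z]
    rw [h2]
    refine (hB1 l (T - t) hs0 z ξ).trans (le_of_eq ?_)
    rw [show -(D1 l) * ‖z - ξ‖ ^ 2 / (T - t) = -(D1 l / (T - t)) * ‖z - ξ‖ ^ 2 from by ring]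
  have step2 : ∀ (l : Fin d) (z : EuclideanSpace ℝ (Fin d)),
      HasFDerivAt (fun w => ∫ ξ, g ξ * v l (w, ξ)) (∫ ξ, g ξ • W2 l (z, ξ)) z := by
    intro l z
    apply hasFDerivAt_integral_of_dominated_of_fderiv_le (𝕜 := ℝ)
      (F := fun w ξ => g ξ * v l (w, ξ)) (F' := fun w ξ => g ξ • W2 l (w, ξ))
      (bound := fun ξ => (∑ k, (C2 k l * (T - t) ^ (-(((d:ℝ) + 2)/2)) * Real.exp (D2 k l / (T - t)))
        * Real.exp (-(D2 k l / (2 * (T - t))) * ‖z - ξ‖ ^ 2)) * |g ξ|) (s := Metric.ball z 1) (Metric.ball_mem_nhds z one_pos)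
    · exact Filter.Eventually.of_forall (fun w =>
        hgm.aestronglyMeasurable.mul (hvcont l w).aestronglyMeasurable)
    · exact hInt1 l z
    · exact hF'2meas l z
    · refine Filter.Eventually.of_forall (fun ξ => fun w hw => ?_)
      rw [show ‖g ξ • W2 l (w, ξ)‖ = |g ξ| * ‖W2 l (w, ξ)‖ from by
        have := norm_smul (g ξ) (W2 l (w, ξ)); exact this, mul_comm]
      exact mul_le_mul_of_nonneg_right (hW2bd l z w hw ξ) (abs_nonneg _)
    · exact hbound2_int l z
    · exact Filter.Eventually.of_forall (fun ξ => fun w hw => (hW2 l ξ w).const_mul (g ξ))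
  have hIntW2 : ∀ (l : Fin d) (z : EuclideanSpace ℝ (Fin d)),
      Integrable (fun ξ => g ξ • W2 l (z, ξ)) := by
    intro l z
    refine (hbound2_int l z).mono' (hF'2meas l z) (Filter.Eventually.of_forall (fun ξ => ?_))
    rw [show ‖g ξ • W2 l (z, ξ)‖ = |g ξ| * ‖W2 l (z, ξ)‖ from by
      have := norm_smul (g ξ) (W2 l (z, ξ)); exact this, mul_comm]
    exact mul_le_mul_of_nonneg_right (hW2bd l z z (Metric.mem_ball_self one_pos) ξ)
      (abs_nonneg _)
  have hpd2 : ∀ (k l : Fin d) (z : EuclideanSpace ℝ (Fin d)),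
      pderiv' d k (fun w => ∫ ξ, g ξ * v l (w, ξ)) z
        = ∫ ξ, g ξ * W2 l (z, ξ) (EuclideanSpace.single k 1) := by
    intro k l z
    show fderiv ℝ (fun w => ∫ ξ, g ξ * v l (w, ξ)) z (EuclideanSpace.single k 1) = _
    rw [(step2 l z).fderiv, ContinuousLinearMap.integral_apply (hIntW2 l z)]
    rfl
  -- time derivative
  have hσpos : (0:ℝ) < (T - t)/2 := by linarith
  set sδ : Set ℝ := Set.Ico 0 T ∩ Set.Ioo (t - (T - t)/2) (t + (T - t)/2) with hsδdef
  have hmem : t ∈ sδ := ⟨ht, by constructor <;> linarith⟩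
  have hsδsub : ∀ t' ∈ sδ, T - t' ∈ Set.Ioc (0:ℝ) T ∧ (T - t)/2 ≤ T - t' := by
    intro t' ht'
    obtain ⟨⟨h1, h2⟩, h3, h4⟩ := ht'
    exact ⟨⟨by linarith, by linarith⟩, by linarith⟩
  have hne : (nhdsWithin t (sδ \ {t})).NeBot := by
    have hlt : t < min (t + (T - t)/2) T := lt_min (by linarith) ht.2
    have hsubset : Set.Ioo t (min (t + (T - t)/2) T) ⊆ sδ \ {t} := by
      intro x hx
      have hx1 := hx.1
      have hx2 := lt_of_lt_of_le hx.2 (min_le_left _ _)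
      have hx3 := lt_of_lt_of_le hx.2 (min_le_right _ _)
      refine ⟨⟨⟨by linarith [ht.1], hx3⟩, by constructor <;> linarith⟩, ?_⟩
      simp only [Set.mem_singleton_iff]
      intro h; rw [h] at hx1; exact lt_irrefl _ hx1
    have h1 : t ∈ closure (Set.Ioo t (min (t + (T - t)/2) T)) := by
      rw [closure_Ioo (ne_of_lt hlt)]
      exact ⟨le_refl _, le_of_lt hlt⟩
    have h2 : (nhdsWithin t (Set.Ioo t (min (t + (T - t)/2) T))).NeBot :=
      mem_closure_iff_nhdsWithin_neBot.1 h1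
    exact h2.mono (nhdsWithin_mono t hsubset)
  -- the within-time-derivative of Γ and its continuity in ξ
  have hdsΓdiff : ∀ ξ, DifferentiableWithinAt ℝ (fun s' => Γ s' y ξ) (Set.Ioc 0 T) (T - t) :=
    fun ξ => ((htime y ξ).differentiableOn (by simp)) (T - t) hs0
  have hdsΓ_eq : ∀ ξ, derivWithin (fun s' => Γ s' y ξ) (Set.Ioc 0 T) (T - t)
      = fderivWithin ℝ (fun p : ℝ × EuclideanSpace ℝ (Fin d) × EuclideanSpace ℝ (Fin d) =>
          Γ p.1 p.2.1 p.2.2) (Set.Ioc 0 T ×ˢ (Set.univ ×ˢ Set.univ)) ((T - t), y, ξ)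
          ((1:ℝ), ((0:EuclideanSpace ℝ (Fin d)), (0:EuclideanSpace ℝ (Fin d)))) := by
    intro ξ
    have hmemS : ((T - t), y, ξ) ∈ Set.Ioc (0:ℝ) T ×ˢ
        ((Set.univ : Set (EuclideanSpace ℝ (Fin d))) ×ˢ Set.univ) :=
      ⟨hs0, Set.mem_univ _, Set.mem_univ _⟩
    have hΦ : HasFDerivWithinAt (fun p : ℝ × EuclideanSpace ℝ (Fin d) × EuclideanSpace ℝ (Fin d) =>
        Γ p.1 p.2.1 p.2.2)
        (fderivWithin ℝ (fun p : ℝ × EuclideanSpace ℝ (Fin d) × EuclideanSpace ℝ (Fin d) =>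
          Γ p.1 p.2.1 p.2.2) (Set.Ioc 0 T ×ˢ (Set.univ ×ˢ Set.univ)) ((T - t), y, ξ))
        (Set.Ioc 0 T ×ˢ (Set.univ ×ˢ Set.univ)) ((T - t), y, ξ) :=
      ((hΓsmooth.differentiableOn (by simp)) _ hmemS).hasFDerivWithinAt
    have hinner : HasDerivWithinAt (fun s : ℝ => (s, y, ξ))
        ((1:ℝ), ((0:EuclideanSpace ℝ (Fin d)), (0:EuclideanSpace ℝ (Fin d))))
        (Set.Ioc 0 T) (T - t) :=
      ((hasDerivAt_id _).prodMk ((hasDerivAt_const _ _).prodMk (hasDerivAt_const _ _))).hasDerivWithinAt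
    have hcomp := hΦ.comp_hasDerivWithinAt (T - t) hinner
      (fun s hs => (⟨hs, Set.mem_univ _, Set.mem_univ _⟩ : (s, y, ξ) ∈ Set.Ioc (0:ℝ) T ×ˢ
        ((Set.univ : Set (EuclideanSpace ℝ (Fin d))) ×ˢ Set.univ)))
    exact hcomp.derivWithin ((uniqueDiffOn_Ioc 0 T) _ hs0)
  have hdsΓcont : Continuous (fun ξ => derivWithin (fun s' => Γ s' y ξ) (Set.Ioc 0 T) (T - t)) := by
    have hW : ContinuousOn (fderivWithin ℝ
        (fun p : ℝ × EuclideanSpace ℝ (Fin d) × EuclideanSpace ℝ (Fin d) => Γ p.1 p.2.1 p.2.2)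
        (Set.Ioc 0 T ×ˢ (Set.univ ×ˢ Set.univ)))
        (Set.Ioc 0 T ×ˢ (Set.univ ×ˢ Set.univ)) :=
      hΓsmooth.continuousOn_fderivWithin hS (by simp)
    have hcont2 : Continuous (fun ξ : EuclideanSpace ℝ (Fin d) => fderivWithin ℝ
        (fun p : ℝ × EuclideanSpace ℝ (Fin d) × EuclideanSpace ℝ (Fin d) => Γ p.1 p.2.1 p.2.2)
        (Set.Ioc 0 T ×ˢ (Set.univ ×ˢ Set.univ)) ((T - t), y, ξ)) := by
      apply hW.comp_continuous
        (continuous_const.prodMk (continuous_const.prodMk continuous_id))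
      intro ξ
      exact ⟨hs0, Set.mem_univ _, Set.mem_univ _⟩
    have : Continuous (fun ξ : EuclideanSpace ℝ (Fin d) => fderivWithin ℝ
        (fun p : ℝ × EuclideanSpace ℝ (Fin d) × EuclideanSpace ℝ (Fin d) => Γ p.1 p.2.1 p.2.2)
        (Set.Ioc 0 T ×ˢ (Set.univ ×ˢ Set.univ)) ((T - t), y, ξ)
        ((1:ℝ), ((0:EuclideanSpace ℝ (Fin d)), (0:EuclideanSpace ℝ (Fin d))))) := by
      exact (ContinuousLinearMap.apply ℝ ℝ
        ((1:ℝ), ((0:EuclideanSpace ℝ (Fin d)), (0:EuclideanSpace ℝ (Fin d))))).continuous.comp hcont2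
    refine this.congr (fun ξ => ?_)
    rw [hdsΓ_eq ξ]
  -- mean value theorem core
  have hcore : ∀ ξ, ∀ a b : ℝ, (T - t)/2 ≤ a → a < b → b ≤ T →
      |Γ b y ξ - Γ a y ξ| ≤ (Ct * ((T - t)/2) ^ (-(((d:ℝ) + 2)/2))
        * Real.exp (-(Dt / T) * ‖y - ξ‖ ^ 2)) * (b - a) := by
    intro ξ a b hσa hab hbT
    have hC'nn : 0 ≤ Ct * ((T - t)/2) ^ (-(((d:ℝ) + 2)/2))
        * Real.exp (-(Dt / T) * ‖y - ξ‖ ^ 2) :=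
      le_of_lt (mul_pos (mul_pos hCtp (Real.rpow_pos_of_pos hσpos _)) (Real.exp_pos _))
    have hIcc : Set.Icc a b ⊆ Set.Ioc 0 T := by
      intro x hx
      exact ⟨lt_of_lt_of_le hσpos (le_trans hσa hx.1), le_trans hx.2 hbT⟩
    have hdiff : DifferentiableOn ℝ (fun s' => Γ s' y ξ) (Set.Icc a b) :=
      ((htime y ξ).differentiableOn (by simp)).mono hIcc
    have hbd : ∀ x ∈ Set.Ico a b, ‖derivWithin (fun s' => Γ s' y ξ) (Set.Icc a b) x‖
        ≤ Ct * ((T - t)/2) ^ (-(((d:ℝ) + 2)/2)) * Real.exp (-(Dt / T) * ‖y - ξ‖ ^ 2) := by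
      intro x hx
      have hx0 : 0 < x := lt_of_lt_of_le hσpos (le_trans hσa hx.1)
      have hxT : x < T := lt_of_lt_of_le hx.2 hbT
      have hDA : DifferentiableAt ℝ (fun s' => Γ s' y ξ) x :=
        ((htime y ξ).contDiffAt (Ioc_mem_nhds hx0 hxT)).differentiableAt (by simp)
      rw [hDA.derivWithin ((uniqueDiffOn_Icc hab) x (Set.Ico_subset_Icc_self hx))]
      rw [Real.norm_eq_abs]
      refine (hBt x ⟨hx0, le_of_lt hxT⟩ y ξ).trans ?_
      have h1 : x ^ (-(((d:ℝ) + 2)/2)) ≤ ((T - t)/2) ^ (-(((d:ℝ) + 2)/2)) :=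
        Real.rpow_le_rpow_of_nonpos hσpos (le_trans hσa hx.1)
          (neg_nonpos.2 (by positivity))
      have h2 : Real.exp (-Dt * ‖y - ξ‖ ^ 2 / x) ≤ Real.exp (-(Dt / T) * ‖y - ξ‖ ^ 2) := by
        apply Real.exp_le_exp.2
        have h3 : Dt * ‖y - ξ‖ ^ 2 / T ≤ Dt * ‖y - ξ‖ ^ 2 / x :=
          div_le_div_of_nonneg_left (by positivity) hx0 (le_of_lt hxT)
        have h4 : -Dt * ‖y - ξ‖ ^ 2 / x = -(Dt * ‖y - ξ‖ ^ 2 / x) := by ring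
        have h5 : -(Dt / T) * ‖y - ξ‖ ^ 2 = -(Dt * ‖y - ξ‖ ^ 2 / T) := by ring
        rw [h4, h5]
        linarith
      calc Ct * x ^ (-(((d:ℝ) + 2)/2)) * Real.exp (-Dt * ‖y - ξ‖ ^ 2 / x)
          ≤ Ct * ((T - t)/2) ^ (-(((d:ℝ) + 2)/2)) * Real.exp (-Dt * ‖y - ξ‖ ^ 2 / x) :=
            mul_le_mul_of_nonneg_right (mul_le_mul_of_nonneg_left h1 (le_of_lt hCtp))
              (le_of_lt (Real.exp_pos _))
        _ ≤ Ct * ((T - t)/2) ^ (-(((d:ℝ) + 2)/2)) * Real.exp (-(Dt / T) * ‖y - ξ‖ ^ 2) :=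
            mul_le_mul_of_nonneg_left h2
              (le_of_lt (mul_pos hCtp (Real.rpow_pos_of_pos hσpos _)))
    have hmvt := norm_image_sub_le_of_norm_deriv_le_segment hdiff hbd b
      (Set.right_mem_Icc.2 (le_of_lt hab))
    simpa [Real.norm_eq_abs] using hmvt
  have hlip : ∀ t' ∈ sδ, ∀ ξ, |Γ (T - t') y ξ * g ξ - Γ (T - t) y ξ * g ξ|
      ≤ ((Ct * ((T - t)/2) ^ (-(((d:ℝ) + 2)/2)) * Real.exp (-(Dt / T) * ‖y - ξ‖ ^ 2)) * |g ξ|)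
        * |t' - t| := by
    intro t' ht' ξ
    have hkey : |Γ (T - t') y ξ - Γ (T - t) y ξ|
        ≤ (Ct * ((T - t)/2) ^ (-(((d:ℝ) + 2)/2)) * Real.exp (-(Dt / T) * ‖y - ξ‖ ^ 2))
          * |t' - t| := by
      have ht'0 : (0:ℝ) ≤ t' := ht'.1.1
      rcases lt_trichotomy t' t with h | h | h
      · have h7 := hcore ξ (T - t) (T - t') (by linarith) (by linarith) (by linarith)
        have h8 : T - t' - (T - t) = |t' - t| := by
          rw [abs_of_neg (by linarith : t' - t < 0)]; ring
        rw [h8] at h7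
        exact h7
      · rw [h]
        simp
      · have h7 := hcore ξ (T - t') (T - t) ((hsδsub t' ht').2) (by linarith)
          (by linarith [ht.1])
        rw [abs_sub_comm] at h7
        have h8 : T - t - (T - t') = |t' - t| := by
          rw [abs_of_pos (by linarith : (0:ℝ) < t' - t)]; ring
        rw [h8] at h7
        exact h7
    have h6 : Γ (T - t') y ξ * g ξ - Γ (T - t) y ξ * g ξ
        = (Γ (T - t') y ξ - Γ (T - t) y ξ) * g ξ := by ring
    rw [h6, abs_mul]
    calc |Γ (T - t') y ξ - Γ (T - t) y ξ| * |g ξ|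
        ≤ ((Ct * ((T - t)/2) ^ (-(((d:ℝ) + 2)/2)) * Real.exp (-(Dt / T) * ‖y - ξ‖ ^ 2))
          * |t' - t|) * |g ξ| := mul_le_mul_of_nonneg_right hkey (abs_nonneg _)
      _ = _ := by ring
  have hMb_int : Integrable (fun ξ => Ct * ((T - t)/2) ^ (-(((d:ℝ) + 2)/2))
      * Real.exp (-(Dt / T) * ‖y - ξ‖ ^ 2) * |g ξ|) :=
    hterm_int _ _ (le_of_lt (mul_pos hCtp (Real.rpow_pos_of_pos hσpos _)))
      (div_pos hDtp hT) y
  have hcompderiv : ∀ ξ, HasDerivWithinAt (fun t' => Γ (T - t') y ξ * g ξ)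
      (derivWithin (fun s' => Γ s' y ξ) (Set.Ioc 0 T) (T - t) * -1 * g ξ) sδ t := by
    intro ξ
    have h1 : HasDerivWithinAt (fun s' => Γ s' y ξ)
        (derivWithin (fun s' => Γ s' y ξ) (Set.Ioc 0 T) (T - t)) (Set.Ioc 0 T) (T - t) :=
      (hdsΓdiff ξ).hasDerivWithinAt
    have h2 : HasDerivWithinAt (fun t' : ℝ => T - t') (-1) sδ t := by
      have := ((hasDerivAt_id t).const_sub T).hasDerivWithinAt (s := sδ)
      simpa using this
    have h3 := h1.comp t h2 (fun t' ht' => (hsδsub t' ht').1)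
    exact h3.mul_const (g ξ)
  obtain ⟨hF'int, hHD⟩ := aux_hasDerivWithinAt_integral
    (F := fun t' ξ => Γ (T - t') y ξ * g ξ)
    (F' := fun ξ => derivWithin (fun s' => Γ s' y ξ) (Set.Ioc 0 T) (T - t) * -1 * g ξ)
    hmem hne
    (fun t' ht' => hmeas0 (T - t') ((hsδsub t' ht').1) y)
    (hInt0 (T - t) hs0 y)
    (((hdsΓcont.mul continuous_const).aestronglyMeasurable).mul hgm.aestronglyMeasurable)
    hMb_int hlip hcompderiv
  have hHD' : HasDerivWithinAt (fun t' => ∫ ξ, Γ (T - t') y ξ * g ξ)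
      (∫ ξ, derivWithin (fun s' => Γ s' y ξ) (Set.Ioc 0 T) (T - t) * -1 * g ξ)
      (Set.Ico 0 T) t := by
    refine hHD.mono_of_mem_nhdsWithin ?_
    rw [hsδdef]
    exact inter_mem_nhdsWithin _ (Ioo_mem_nhds (by linarith) (by linarith))
  have hdW : derivWithin (fun t' => ∫ ξ, Γ (T - t') y ξ * g ξ) (Set.Ico 0 T) t
      = ∫ ξ, derivWithin (fun s' => Γ s' y ξ) (Set.Ioc 0 T) (T - t) * -1 * g ξ :=
    hHD'.derivWithin ((uniqueDiffOn_Ico 0 T) t ht)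
  -- assemble
  refine ⟨hInt0 _ hs0 y, hHD'.differentiableWithinAt, (step1 y).differentiableAt, ?_, ?_⟩
  · intro i
    have he : (fun y' => pderiv' d i (fun y'' => ∫ ξ, Γ (T - t) y'' ξ * g ξ) y')
        = fun y' => ∫ ξ, g ξ * v i (y', ξ) := funext (fun y' => hpd1 i y')
    rw [he]
    exact (step2 i y).differentiableAt
  · rw [hdW]
    have hterm3 : ∀ k l : Fin d,
        pderiv' d k (fun y' => pderiv' d l (fun y'' => ∫ ξ, Γ (T - t) y'' ξ * g ξ) y') y
          = ∫ ξ, g ξ * W2 l (y, ξ) (EuclideanSpace.single k 1) := by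
      intro k l
      have he : (fun y' => pderiv' d l (fun y'' => ∫ ξ, Γ (T - t) y'' ξ * g ξ) y')
          = fun y' => ∫ ξ, g ξ * v l (y', ξ) := funext (fun y' => hpd1 l y')
      rw [he]
      exact hpd2 k l y
    rw [show (∑ i, bhat y i * pderiv' d i (fun y' => ∫ ξ, Γ (T - t) y' ξ * g ξ) y)
        = ∑ i, bhat y i * ∫ ξ, g ξ * v i (y, ξ) from
      Finset.sum_congr rfl (fun i _ => by rw [hpd1 i y])]
    rw [show (∑ k, ∑ l, A y k l *
          pderiv' d k (fun y' => pderiv' d l (fun y'' => ∫ ξ, Γ (T - t) y'' ξ * g ξ) y') y)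
        = ∑ k, ∑ l, A y k l * ∫ ξ, g ξ * W2 l (y, ξ) (EuclideanSpace.single k 1) from
      Finset.sum_congr rfl (fun k _ => Finset.sum_congr rfl (fun l _ => by rw [hterm3 k l]))]
    have hI2 : ∀ i : Fin d, Integrable (fun ξ => bhat y i * (g ξ * v i (y, ξ))) :=
      fun i => (hInt1 i y).const_mul _
    have hIW : ∀ k l : Fin d,
        Integrable (fun ξ => g ξ * W2 l (y, ξ) (EuclideanSpace.single k 1)) := by
      intro k l
      have := (hIntW2 l y).apply_continuousLinearMap (EuclideanSpace.single k 1)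
      exact this
    have e2 : (∑ i, bhat y i * ∫ ξ, g ξ * v i (y, ξ))
        = ∫ ξ, ∑ i, bhat y i * (g ξ * v i (y, ξ)) := by
      rw [integral_finset_sum _ (fun i _ => hI2 i)]
      exact Finset.sum_congr rfl (fun i _ => (integral_const_mul _ _).symm)
    have e3 : (∑ k, ∑ l, A y k l * ∫ ξ, g ξ * W2 l (y, ξ) (EuclideanSpace.single k 1))
        = ∫ ξ, ∑ k, ∑ l, A y k l * (g ξ * W2 l (y, ξ) (EuclideanSpace.single k 1)) := by
      rw [integral_finset_sum _ (fun k _ =>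
        integrable_finset_sum _ (fun l _ => (hIW k l).const_mul _))]
      refine Finset.sum_congr rfl (fun k _ => ?_)
      rw [integral_finset_sum _ (fun l _ => (hIW k l).const_mul _)]
      exact Finset.sum_congr rfl (fun l _ => (integral_const_mul _ _).symm)
    rw [e2, e3, ← integral_const_mul (1/2 : ℝ)]
    have If1 : Integrable (fun ξ =>
        derivWithin (fun s' => Γ s' y ξ) (Set.Ioc 0 T) (T - t) * -1 * g ξ) := hF'int
    have If2 : Integrable (fun ξ => ∑ i, bhat y i * (g ξ * v i (y, ξ))) :=
      integrable_finset_sum _ (fun i _ => hI2 i)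
    have If3 : Integrable (fun ξ =>
        (1/2 : ℝ) * ∑ k, ∑ l, A y k l * (g ξ * W2 l (y, ξ) (EuclideanSpace.single k 1))) :=
      ((integrable_finset_sum _ (fun k _ => integrable_finset_sum _
        (fun l _ => (hIW k l).const_mul _)))).const_mul _
    have hzero : (fun ξ =>
        derivWithin (fun s' => Γ s' y ξ) (Set.Ioc 0 T) (T - t) * -1 * g ξ
          + ∑ i, bhat y i * (g ξ * v i (y, ξ))
          + (1/2 : ℝ) * ∑ k, ∑ l, A y k l * (g ξ * W2 l (y, ξ) (EuclideanSpace.single k 1)))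
        = fun _ => (0:ℝ) := by
      funext ξ
      have hP := hPDE (T - t) hs0 y ξ
      simp only [hv_eq, h2nd'] at hP
      rw [show (∑ i, bhat y i * (g ξ * v i (y, ξ)))
          = (∑ i, bhat y i * v i (y, ξ)) * g ξ from by
        rw [Finset.sum_mul]; exact Finset.sum_congr rfl (fun i _ => by ring)]
      rw [show (∑ k, ∑ l, A y k l * (g ξ * W2 l (y, ξ) (EuclideanSpace.single k 1)))
          = (∑ k, ∑ l, A y k l * W2 l (y, ξ) (EuclideanSpace.single k 1)) * g ξ from by
        rw [Finset.sum_mul]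
        refine Finset.sum_congr rfl (fun k _ => ?_)
        rw [Finset.sum_mul]
        exact Finset.sum_congr rfl (fun l _ => by ring)]
      rw [hP]
      ring
    have hz2 : ∫ ξ, (derivWithin (fun s' => Γ s' y ξ) (Set.Ioc 0 T) (T - t) * -1 * g ξ
          + ∑ i, bhat y i * (g ξ * v i (y, ξ))
          + (1/2 : ℝ) * ∑ k, ∑ l, A y k l * (g ξ * W2 l (y, ξ) (EuclideanSpace.single k 1)))
        = 0 := by
      rw [hzero]
      exact integral_zero _ _
    have hsplit : ∫ ξ, (derivWithin (fun s' => Γ s' y ξ) (Set.Ioc 0 T) (T - t) * -1 * g ξ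
          + ∑ i, bhat y i * (g ξ * v i (y, ξ))
          + (1/2 : ℝ) * ∑ k, ∑ l, A y k l * (g ξ * W2 l (y, ξ) (EuclideanSpace.single k 1)))
        = (∫ ξ, derivWithin (fun s' => Γ s' y ξ) (Set.Ioc 0 T) (T - t) * -1 * g ξ)
          + (∫ ξ, ∑ i, bhat y i * (g ξ * v i (y, ξ)))
          + (∫ ξ, (1/2 : ℝ) * ∑ k, ∑ l,
              A y k l * (g ξ * W2 l (y, ξ) (EuclideanSpace.single k 1))) := by
      have If12 : Integrable (fun ξ =>
          derivWithin (fun s' => Γ s' y ξ) (Set.Ioc 0 T) (T - t) * -1 * g ξ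
            + ∑ i, bhat y i * (g ξ * v i (y, ξ))) := If1.add If2
      rw [integral_add If12 If3, integral_add If1 If2]
    rw [← hsplit, hz2]
end

section
/- Let T > 0 and K > 0, and for t ∈ [0,T) and x > 0 let F(t,x) := ∫_ℝ (x e^{z√(T−t) − (T−t)/2} − K)_+ (2π)^{−1/2} e^{−z²/2} dz. Then for each t ∈ [0,T) the function x ↦ F(t,x) is twice differentiable on (0,∞) and ∂²F/∂x²(t,x) = (1/(x √(2π(T−t)))) · exp(−(log(x/K) + (T−t)/2)² / (2(T−t))). -/
/-!
Splitting the integral at the point where the payoff vanishes gives the Black–Scholes formula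
`F(t, x) = x Φ(d₊) - K Φ(d₋)` with `σ = √(T - t)`, `d₊ = (log (x / K) + σ² / 2) / σ` and
`d₋ = d₊ - σ`. Since `x φ(d₊) = K φ(d₋)`, the terms coming from differentiating `d₊` and `d₋`
cancel, so `∂F/∂x = Φ(d₊)`, and differentiating once more gives `φ(d₊) / (x σ)`.
-/

open MeasureTheory Real

/-- The Black–Scholes call price function (volatility 1, maturity `T`, strike `K`):
`F(t,x) = ∫ (x e^{z√(T-t) - (T-t)/2} - K)_+ (2π)^{-1/2} e^{-z²/2} dz`. -/
noncomputable def bsCall (T K t x : ℝ) : ℝ :=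
  ∫ z : ℝ, max (x * Real.exp (z * Real.sqrt (T - t) - (T - t) / 2) - K) 0 *
    (Real.exp (-z ^ 2 / 2) / Real.sqrt (2 * Real.pi))

noncomputable def stdNormalPDF (z : ℝ) : ℝ := exp (-z ^ 2 / 2) / √(2 * π)

noncomputable def stdNormalCDF (a : ℝ) : ℝ := ∫ z in Set.Iic a, stdNormalPDF z

@[simp]
lemma stdNormalPDF_neg (z : ℝ) : stdNormalPDF (-z) = stdNormalPDF z := by
  simp [stdNormalPDF]

lemma continuous_stdNormalPDF : Continuous stdNormalPDF := by
  unfold stdNormalPDF; fun_prop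

lemma integrable_stdNormalPDF : Integrable stdNormalPDF := by
  have h : Integrable fun z : ℝ => exp (-(1 / 2) * z ^ 2) := integrable_exp_neg_mul_sq (by norm_num)
  refine (h.div_const √(2 * π)).congr (.of_forall fun z => ?_)
  simp only [stdNormalPDF]; ring_nf

lemma hasDerivAt_stdNormalCDF (a : ℝ) : HasDerivAt stdNormalCDF (stdNormalPDF a) a := by
  have hΦ : stdNormalCDF = fun b => stdNormalCDF 0 + ∫ z in (0 : ℝ)..b, stdNormalPDF z := by
    funext b
    rw [← intervalIntegral.integral_Iic_sub_Iic integrable_stdNormalPDF.integrableOn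
      integrable_stdNormalPDF.integrableOn, stdNormalCDF, stdNormalCDF, add_sub_cancel]
  rw [hΦ]
  exact (intervalIntegral.integral_hasDerivAt_right integrable_stdNormalPDF.intervalIntegrable
    (continuous_stdNormalPDF.stronglyMeasurableAtFilter _ _)
    continuous_stdNormalPDF.continuousAt).const_add _

lemma integral_Ici_stdNormalPDF_sub (a c : ℝ) :
    ∫ z in Set.Ici a, stdNormalPDF (z - c) = stdNormalCDF (c - a) := by
  have hpre : (· - c) ⁻¹' Set.Ici (a - c) = Set.Ici a := by
    ext z; simp
  rw [← hpre, (measurePreserving_sub_right volume c).setIntegral_preimage_emb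
    (measurableEmbedding_subRight c), integral_Ici_eq_integral_Ioi, stdNormalCDF,
    ← neg_sub c a, ← integral_comp_neg_Iic]
  simp

noncomputable def bsDPlus (σ K x : ℝ) : ℝ := (log (x / K) + σ ^ 2 / 2) / σ

noncomputable def bsPrice (σ K x : ℝ) : ℝ :=
  x * stdNormalCDF (bsDPlus σ K x) - K * stdNormalCDF (bsDPlus σ K x - σ)

lemma exp_mul_stdNormalPDF (σ z : ℝ) :
    exp (z * σ - σ ^ 2 / 2) * stdNormalPDF z = stdNormalPDF (z - σ) := by
  rw [stdNormalPDF, stdNormalPDF, mul_div_assoc', ← exp_add]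
  ring_nf

lemma bsDPlus_mul_sub {σ : ℝ} (hσ : σ ≠ 0) (K x : ℝ) :
    bsDPlus σ K x * σ - σ ^ 2 / 2 = log (x / K) := by
  rw [bsDPlus, div_mul_cancel₀ _ hσ]; ring

lemma mul_stdNormalPDF_bsDPlus {σ K x : ℝ} (hσ : σ ≠ 0) (hK : 0 < K) (hx : 0 < x) :
    x * stdNormalPDF (bsDPlus σ K x) = K * stdNormalPDF (bsDPlus σ K x - σ) := by
  rw [← exp_mul_stdNormalPDF, bsDPlus_mul_sub hσ, exp_log (div_pos hx hK), ← mul_assoc,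
    mul_div_cancel₀ _ hK.ne']

lemma call_payoff_eq (σ K x z : ℝ) (hσ : σ ≠ 0) (hK : 0 < K) (hx : 0 < x) :
    x * exp (z * σ - σ ^ 2 / 2) - K = K * (exp (σ * (z - (σ - bsDPlus σ K x))) - 1) := by
  have : σ * (z - (σ - bsDPlus σ K x)) = log (x / K) + (z * σ - σ ^ 2 / 2) := by
    rw [← bsDPlus_mul_sub hσ]; ring
  rw [this, exp_add, exp_log (div_pos hx hK)]
  field_simp

lemma integral_call_payoff {σ K x : ℝ} (hσ : 0 < σ) (hK : 0 < K) (hx : 0 < x) :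
    ∫ z, max (x * exp (z * σ - σ ^ 2 / 2) - K) 0 * stdNormalPDF z = bsPrice σ K x := by
  have hpayoff : ∀ z, max (x * exp (z * σ - σ ^ 2 / 2) - K) 0 * stdNormalPDF z
      = (Set.Ici (σ - bsDPlus σ K x)).indicator
          (fun z => x * stdNormalPDF (z - σ) - K * stdNormalPDF z) z := by
    intro z
    rw [call_payoff_eq σ K x z hσ.ne' hK hx]
    by_cases hz : z ∈ Set.Ici (σ - bsDPlus σ K x)
    · have : 0 ≤ K * (exp (σ * (z - (σ - bsDPlus σ K x))) - 1) :=
        mul_nonneg hK.le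
          (sub_nonneg.2 (one_le_exp (mul_nonneg hσ.le (sub_nonneg.2 (Set.mem_Ici.1 hz)))))
      rw [max_eq_left this, Set.indicator_of_mem hz, ← call_payoff_eq σ K x z hσ.ne' hK hx,
        sub_mul, mul_assoc, exp_mul_stdNormalPDF]
    · have : K * (exp (σ * (z - (σ - bsDPlus σ K x))) - 1) ≤ 0 :=
        mul_nonpos_of_nonneg_of_nonpos hK.le
          (sub_nonpos.2 (exp_le_one_iff.2 (mul_nonpos_of_nonneg_of_nonpos hσ.le
            (by linarith [Set.notMem_Ici.1 hz]))))
      rw [max_eq_right this, zero_mul, Set.indicator_of_notMem hz]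
  have hint : ∀ c, IntegrableOn (fun z => stdNormalPDF (z - c)) (Set.Ici (σ - bsDPlus σ K x)) :=
    fun c => (integrable_stdNormalPDF.comp_sub_right c).integrableOn
  simp_rw [hpayoff]
  rw [integral_indicator measurableSet_Ici, integral_sub ((hint σ).const_mul x)
    (by simpa using (hint 0).const_mul K), integral_const_mul, integral_const_mul,
    integral_Ici_stdNormalPDF_sub, sub_sub_cancel]
  congr 2
  simpa using integral_Ici_stdNormalPDF_sub (σ - bsDPlus σ K x) 0

lemma hasDerivAt_bsDPlus (σ : ℝ) {K x : ℝ} (hK : K ≠ 0) (hx : x ≠ 0) :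
    HasDerivAt (bsDPlus σ K) (1 / (x * σ)) x := by
  have hlog := ((hasDerivAt_id x).div_const K).log (div_ne_zero hx hK)
  refine ((hlog.add_const (σ ^ 2 / 2)).div_const σ).congr_deriv ?_
  simp only [id_eq]
  field_simp

lemma hasDerivAt_stdNormalCDF_bsDPlus (σ : ℝ) {K x : ℝ} (hK : K ≠ 0) (hx : x ≠ 0) :
    HasDerivAt (fun y => stdNormalCDF (bsDPlus σ K y))
      (stdNormalPDF (bsDPlus σ K x) / (x * σ)) x := by
  rw [div_eq_mul_one_div]
  exact (hasDerivAt_stdNormalCDF _).comp x (hasDerivAt_bsDPlus σ hK hx)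

lemma hasDerivAt_bsPrice {σ K x : ℝ} (hσ : σ ≠ 0) (hK : 0 < K) (hx : 0 < x) :
    HasDerivAt (bsPrice σ K) (stdNormalCDF (bsDPlus σ K x)) x := by
  have hd := hasDerivAt_bsDPlus σ hK.ne' hx.ne'
  have hminus := (hasDerivAt_stdNormalCDF _).comp x (hd.sub_const σ)
  refine (((hasDerivAt_id x).mul (hasDerivAt_stdNormalCDF_bsDPlus σ hK.ne' hx.ne')).sub
    (hminus.const_mul K)).congr_deriv ?_
  have := mul_stdNormalPDF_bsDPlus hσ hK hx
  simp only [id_eq, one_mul]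
  field_simp
  linear_combination this

lemma bsCall_eq_bsPrice {T K t x : ℝ} (ht : t < T) (hK : 0 < K) (hx : 0 < x) :
    bsCall T K t x = bsPrice √(T - t) K x := by
  have hσ : 0 < √(T - t) := sqrt_pos.2 (sub_pos.2 ht)
  rw [← integral_call_payoff hσ hK hx, sq_sqrt (sub_pos.2 ht).le]
  rfl

lemma stdNormalPDF_bsDPlus_div {s : ℝ} (hs : 0 < s) (K : ℝ) {x : ℝ} (hx : 0 < x) :
    stdNormalPDF (bsDPlus √s K x) / (x * √s)
      = 1 / (x * √(2 * π * s)) * exp (-(log (x / K) + s / 2) ^ 2 / (2 * s)) := by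
  rw [stdNormalPDF, bsDPlus, div_pow, sq_sqrt hs.le, sqrt_mul (by positivity) s]
  field_simp

theorem stmt6_general (T K : ℝ) (hK : 0 < K) :
    ∀ t ∈ Set.Ico 0 T, ∀ x ∈ Set.Ioi (0 : ℝ),
      DifferentiableAt ℝ (fun x' => bsCall T K t x') x ∧
      DifferentiableAt ℝ (deriv (fun x' => bsCall T K t x')) x ∧
      deriv (deriv (fun x' => bsCall T K t x')) x
        = (1 / (x * Real.sqrt (2 * Real.pi * (T - t)))) *
            Real.exp (-(Real.log (x / K) + (T - t) / 2) ^ 2 / (2 * (T - t))) := by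
  rintro t ⟨-, htT⟩ x (hx : 0 < x)
  have hσ : 0 < √(T - t) := sqrt_pos.2 (sub_pos.2 htT)
  have hdelta : ∀ y > 0, HasDerivAt (bsCall T K t) (stdNormalCDF (bsDPlus √(T - t) K y)) y :=
    fun y hy => (hasDerivAt_bsPrice hσ.ne' hK hy).congr_of_eventuallyEq
      (Filter.eventually_of_mem (Ioi_mem_nhds hy) fun z hz => bsCall_eq_bsPrice htT hK hz)
  have hgamma : HasDerivAt (deriv (bsCall T K t))
      (stdNormalPDF (bsDPlus √(T - t) K x) / (x * √(T - t))) x :=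
    (hasDerivAt_stdNormalCDF_bsDPlus _ hK.ne' hx.ne').congr_of_eventuallyEq
      (Filter.eventually_of_mem (Ioi_mem_nhds hx) fun y hy => (hdelta y hy).deriv)
  refine ⟨(hdelta x hx).differentiableAt, hgamma.differentiableAt, ?_⟩
  rw [hgamma.deriv, stdNormalPDF_bsDPlus_div (sub_pos.2 htT) K hx]

/-- For each `t ∈ [0,T)`, the Black–Scholes call price `x ↦ F(t,x)` is twice
differentiable on `(0,∞)` with
`∂²F/∂x²(t,x) = (1/(x √(2π(T-t)))) exp(-(log(x/K) + (T-t)/2)²/(2(T-t)))`. -/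
theorem stmt6 (T K : ℝ) (hT : 0 < T) (hK : 0 < K) :
    ∀ t ∈ Set.Ico 0 T, ∀ x ∈ Set.Ioi (0 : ℝ),
      DifferentiableAt ℝ (fun x' => bsCall T K t x') x ∧
      DifferentiableAt ℝ (deriv (fun x' => bsCall T K t x')) x ∧
      deriv (deriv (fun x' => bsCall T K t x')) x
        = (1 / (x * Real.sqrt (2 * Real.pi * (T - t)))) *
            Real.exp (-(Real.log (x / K) + (T - t) / 2) ^ 2 / (2 * (T - t))) :=
  stmt6_general T K hK
end

section
/- Let T > 0, 0 ≤ A < B ≤ T, C_H > 0 and C_τ > 0. Let H² : [0,T) → [0,∞) be Borel measurable with H²(u) ≥ C_H for all u ∈ [A,B). For each n ≥ 1 let 0 = t_0^n ≤ t_1^n ≤ ⋯ ≤ t_n^n = T be a partition of [0,T] with mesh sup_{1 ≤ i ≤ n}(t_i^n − t_{i-1}^n) ≤ C_τ/n, and set I_n := {i ∈ {1,…,n} : A ≤ t_{i-1}^n and t_i^n ≤ B}. Then liminf_{n→∞} n · ∑_{i ∈ I_n} ∫_{t_{i-1}^n}^{t_i^n} (t_i^n − t) H²(t) dt ≥ C_H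 (B − A)²/2. -/
/-!
On a cell `(t_{i-1}, t_i]` of `I_n` the bound `H² ≥ C_H` gives
`∫ (t_i - t) H²(t) dt ≥ C_H Δ_i² / 2`, and Cauchy–Schwarz gives `n ∑ Δ_i² ≥ (∑ Δ_i)²`.
The cells of `I_n` cover `[A, B]` except for at most one cell at each end, so
`∑_{I_n} Δ_i ≥ B - A - 2 C_τ / n`, and the resulting lower bound tends to `C_H (B - A)² / 2`.
-/

open MeasureTheory Real Filter

open scoped Classical ENNReal

theorem Finset.sum_Ioc_sub_pred (f : ℕ → ℝ) {p q : ℕ} (hpq : p ≤ q) :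
    ∑ i ∈ Finset.Ioc p q, (f i - f (i - 1)) = f q - f p := by
  rw [← Finset.Ico_add_one_add_one_eq_Ioc, ← Finset.sum_Ico_add' _ p q 1]
  simpa using Finset.sum_Ico_sub f hpq

theorem sub_sub_two_mul_le_sum_increments {f : ℕ → ℝ} {n : ℕ} {A B δ : ℝ}
    (hf : MonotoneOn f (Set.Iic n)) (h0 : f 0 ≤ A) (hAB : A ≤ B) (hn : B ≤ f n)
    (hδ : ∀ i ∈ Finset.Icc 1 n, f i - f (i - 1) ≤ δ) (hδ0 : 0 ≤ δ) :
    B - A - 2 * δ ≤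
      ∑ i ∈ (Finset.Icc 1 n).filter (fun i => A ≤ f (i - 1) ∧ f i ≤ B), (f i - f (i - 1)) := by
  have hinc : ∀ i ∈ Finset.Icc 1 n, 0 ≤ f i - f (i - 1) := fun i hi => by
    have hi := Finset.mem_Icc.1 hi
    exact sub_nonneg.2 (hf (Set.mem_Iic.2 (by omega)) (Set.mem_Iic.2 hi.2) (by omega))
  -- `p` is the first node `≥ A`, `q` the last node `≤ B`; the cells between them lie in the
  -- filter, and `f p ≤ A + δ`, `B - δ ≤ f q` because one cell has length at most `δ`.
  have hreach : ∃ k, A ≤ f k := ⟨n, hAB.trans hn⟩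
  set p := Nat.find hreach
  set q := Nat.findGreatest (fun k => f k ≤ B) n
  have hpn : p ≤ n := Nat.find_min' hreach (hAB.trans hn)
  have hqn : q ≤ n := Nat.findGreatest_le n
  have hqB : f q ≤ B :=
    Nat.findGreatest_spec (P := fun k => f k ≤ B) (Nat.zero_le n) (h0.trans hAB)
  have hfp : f p ≤ A + δ := by
    rcases Nat.eq_zero_or_pos p with hp | hp
    · rw [hp]; linarith
    · have hbelow : f (p - 1) < A := not_le.1 (Nat.find_min hreach (by omega))
      linarith [hδ p (Finset.mem_Icc.2 ⟨hp, hpn⟩)]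
  have hfq : B - δ ≤ f q := by
    rcases hqn.eq_or_lt with hq | hq
    · rw [hq]; linarith
    · have habove : B < f (q + 1) :=
        not_le.1 (Nat.findGreatest_is_greatest (P := fun k => f k ≤ B) (by omega) hq)
      have hstep := hδ (q + 1) (Finset.mem_Icc.2 ⟨by omega, hq⟩)
      rw [Nat.add_sub_cancel] at hstep
      linarith
  rcases le_or_gt p q with hpq | hqp
  · have hsub : Finset.Ioc p q ⊆
        (Finset.Icc 1 n).filter (fun i => A ≤ f (i - 1) ∧ f i ≤ B) := fun i hi => by
      have hi := Finset.mem_Ioc.1 hi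
      refine Finset.mem_filter.2 ⟨Finset.mem_Icc.2 ⟨by omega, by omega⟩, ?_, ?_⟩
      · exact (Nat.find_spec hreach).trans
          (hf (Set.mem_Iic.2 hpn) (Set.mem_Iic.2 (by omega)) (by omega))
      · exact (hf (Set.mem_Iic.2 (by omega)) (Set.mem_Iic.2 hqn) hi.2).trans hqB
    calc B - A - 2 * δ ≤ f q - f p := by linarith
      _ = ∑ i ∈ Finset.Ioc p q, (f i - f (i - 1)) := (Finset.sum_Ioc_sub_pred f hpq).symm
      _ ≤ _ := Finset.sum_le_sum_of_subset_of_nonneg hsub fun i hi _ =>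
          hinc i (Finset.mem_filter.1 hi).1
  · have hfqp : f q ≤ f p := hf (Set.mem_Iic.2 hqn) (Set.mem_Iic.2 hpn) hqp.le
    have hsum : 0 ≤ ∑ i ∈ (Finset.Icc 1 n).filter (fun i => A ≤ f (i - 1) ∧ f i ≤ B),
        (f i - f (i - 1)) :=
      Finset.sum_nonneg fun i hi => hinc i (Finset.mem_filter.1 hi).1
    linarith

theorem sq_le_mul_sum_sq_of_le_sum {ι : Type*} {s : Finset ι} {x : ι → ℝ} {L : ℝ} {n : ℕ}
    (hs : s.card ≤ n) (hL : 0 ≤ L) (hLx : L ≤ ∑ i ∈ s, x i) :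
    L ^ 2 ≤ n * ∑ i ∈ s, x i ^ 2 :=
  calc L ^ 2 ≤ (∑ i ∈ s, x i) ^ 2 := pow_le_pow_left₀ hL hLx 2
    _ ≤ s.card * ∑ i ∈ s, x i ^ 2 := sq_sum_le_card_mul_sum_sq
    _ ≤ n * ∑ i ∈ s, x i ^ 2 := by gcongr

theorem ofReal_le_setLIntegral_Ioc_sub_mul {c d C : ℝ} {H : ℝ → ℝ} (hcd : c ≤ d) (hC : 0 ≤ C)
    (hH : ∀ u ∈ Set.Ico c d, C ≤ H u) :
    ENNReal.ofReal (C * (d - c) ^ 2 / 2) ≤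
      ∫⁻ s in Set.Ioc c d, ENNReal.ofReal ((d - s) * H s) := by
  have hweight : ∫⁻ s in Set.Ioc c d, ENNReal.ofReal (C * (d - s)) =
      ENNReal.ofReal (C * (d - c) ^ 2 / 2) := by
    rw [← ofReal_integral_eq_lintegral_ofReal, ← intervalIntegral.integral_of_le hcd]
    · rw [intervalIntegral.integral_const_mul]
      congr 1
      rw [intervalIntegral.integral_sub intervalIntegrable_const
        intervalIntegral.intervalIntegrable_id, integral_id, intervalIntegral.integral_const,
        smul_eq_mul]
      ring
    · exact (by fun_prop : Continuous fun s => C * (d - s)).integrableOn_Ioc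
    · filter_upwards [ae_restrict_mem measurableSet_Ioc] with s hs
      exact mul_nonneg hC (sub_nonneg.2 hs.2)
  rw [← hweight]
  refine setLIntegral_mono' measurableSet_Ioc fun s hs => ENNReal.ofReal_le_ofReal ?_
  rcases hs.2.eq_or_lt with rfl | hsd
  · simp
  · nlinarith [hH s ⟨hs.1.le, hsd⟩]

theorem ofReal_le_mul_sum_setLIntegral_of_partition {f : ℕ → ℝ} {H : ℝ → ℝ} {n : ℕ}
    {A B C δ : ℝ}
    (hf : MonotoneOn f (Set.Iic n)) (h0 : f 0 ≤ A) (hn : B ≤ f n)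
    (hδ : ∀ i ∈ Finset.Icc 1 n, f i - f (i - 1) ≤ δ) (hδ0 : 0 ≤ δ) (hδAB : 2 * δ ≤ B - A)
    (hC : 0 ≤ C) (hH : ∀ u ∈ Set.Ico A B, C ≤ H u) :
    ENNReal.ofReal (C * (B - A - 2 * δ) ^ 2 / 2) ≤
      n * ∑ i ∈ (Finset.Icc 1 n).filter (fun i => A ≤ f (i - 1) ∧ f i ≤ B),
        ∫⁻ s in Set.Ioc (f (i - 1)) (f i), ENNReal.ofReal ((f i - s) * H s) := by
  set S := (Finset.Icc 1 n).filter (fun i => A ≤ f (i - 1) ∧ f i ≤ B)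
  have hmemS : ∀ i ∈ S, f (i - 1) ≤ f i ∧ A ≤ f (i - 1) ∧ f i ≤ B := fun i hi => by
    obtain ⟨hi, hiA, hiB⟩ := Finset.mem_filter.1 hi
    have hi := Finset.mem_Icc.1 hi
    exact ⟨hf (Set.mem_Iic.2 (by omega)) (Set.mem_Iic.2 hi.2) (by omega), hiA, hiB⟩
  have hcard : S.card ≤ n := (Finset.card_filter_le _ _).trans (by simp)
  have hsq : (B - A - 2 * δ) ^ 2 ≤ n * ∑ i ∈ S, (f i - f (i - 1)) ^ 2 :=
    sq_le_mul_sum_sq_of_le_sum hcard (by linarith)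
      (sub_sub_two_mul_le_sum_increments hf h0 (by linarith) hn hδ hδ0)
  calc ENNReal.ofReal (C * (B - A - 2 * δ) ^ 2 / 2)
      ≤ ENNReal.ofReal (n * ∑ i ∈ S, C * (f i - f (i - 1)) ^ 2 / 2) := by
        rw [← Finset.sum_div, ← Finset.mul_sum]
        refine ENNReal.ofReal_le_ofReal ?_
        nlinarith
    _ = n * ∑ i ∈ S, ENNReal.ofReal (C * (f i - f (i - 1)) ^ 2 / 2) := by
        rw [ENNReal.ofReal_mul (by positivity), ENNReal.ofReal_natCast,
          ENNReal.ofReal_sum_of_nonneg fun i _ => by positivity]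
    _ ≤ _ := by
        gcongr with i hi
        obtain ⟨hle, hiA, hiB⟩ := hmemS i hi
        exact ofReal_le_setLIntegral_Ioc_sub_mul hle hC fun u hu =>
          hH u ⟨hiA.trans hu.1, hu.2.trans_le hiB⟩

theorem stmt10_general (T A B C_H C_τ : ℝ) (hA : 0 ≤ A) (hAB : A < B) (hB : B ≤ T)
    (hCH : 0 < C_H) (hCτ : 0 < C_τ)
    (H2 : ℝ → ℝ)
    (hH2lb : ∀ u ∈ Set.Ico A B, C_H ≤ H2 u)
    (t : ℕ → ℕ → ℝ)
    (ht0 : ∀ n : ℕ, 1 ≤ n → t n 0 = 0) (htn : ∀ n : ℕ, 1 ≤ n → t n n = T)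
    (hmono : ∀ n : ℕ, 1 ≤ n → ∀ i j : ℕ, i ≤ j → j ≤ n → t n i ≤ t n j)
    (hmesh : ∀ n : ℕ, 1 ≤ n → ∀ i ∈ Finset.Icc 1 n, t n i - t n (i - 1) ≤ C_τ / n) :
    ENNReal.ofReal (C_H * (B - A) ^ 2 / 2) ≤
      Filter.atTop.liminf (fun n : ℕ =>
        (n : ℝ≥0∞) *
          ∑ i ∈ (Finset.Icc 1 n).filter (fun i => A ≤ t n (i - 1) ∧ t n i ≤ B),
            ∫⁻ s in Set.Ioc (t n (i - 1)) (t n i),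
              ENNReal.ofReal ((t n i - s) * H2 s)) := by
  have hmesh_small : Tendsto (fun n : ℕ => 2 * (C_τ / n)) atTop (nhds 0) := by
    simpa using (tendsto_const_div_atTop_nhds_zero_nat C_τ).const_mul 2
  have hbound : ∀ᶠ n : ℕ in atTop,
      ENNReal.ofReal (C_H * (B - A - 2 * (C_τ / n)) ^ 2 / 2) ≤
        n * ∑ i ∈ (Finset.Icc 1 n).filter (fun i => A ≤ t n (i - 1) ∧ t n i ≤ B),
          ∫⁻ s in Set.Ioc (t n (i - 1)) (t n i), ENNReal.ofReal ((t n i - s) * H2 s) := by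
    filter_upwards [eventually_ge_atTop 1, hmesh_small.eventually_le_const (sub_pos.2 hAB)]
      with n hn hδAB
    exact ofReal_le_mul_sum_setLIntegral_of_partition
      (fun i hi j hj hij => hmono n hn i j hij hj) ((ht0 n hn).trans_le hA)
      (hB.trans_eq (htn n hn).symm) (hmesh n hn) (by positivity) hδAB hCH.le hH2lb
  have hlim : Tendsto (fun n : ℕ => ENNReal.ofReal (C_H * (B - A - 2 * (C_τ / n)) ^ 2 / 2))
      atTop (nhds (ENNReal.ofReal (C_H * (B - A) ^ 2 / 2))) := by
    refine (ENNReal.continuous_ofReal.tendsto _).comp ?_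
    simpa using (((tendsto_const_nhds (x := B - A)).sub hmesh_small).pow 2).const_mul C_H
      |>.div_const 2
  exact hlim.liminf_eq.symm.trans_le (liminf_le_liminf hbound)

/-- Lower-bound step in the proof of Theorem 3.1: if `H² ≥ C_H` on `[A,B)` and the
partitions `(t_i^n)_{i=0}^n` of `[0,T]` have mesh at most `C_τ/n`, then with
`I_n = {i : A ≤ t_{i-1}^n, t_i^n ≤ B}`,
`liminf_n n ∑_{i ∈ I_n} ∫_{t_{i-1}^n}^{t_i^n} (t_i^n - t) H²(t) dt ≥ C_H (B-A)²/2`. -/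
theorem stmt10 (T A B C_H C_τ : ℝ) (hT : 0 < T) (hA : 0 ≤ A) (hAB : A < B) (hB : B ≤ T)
    (hCH : 0 < C_H) (hCτ : 0 < C_τ)
    (H2 : ℝ → ℝ) (hH2m : Measurable H2)
    (hH2nonneg : ∀ u ∈ Set.Ico (0 : ℝ) T, 0 ≤ H2 u)
    (hH2lb : ∀ u ∈ Set.Ico A B, C_H ≤ H2 u)
    (t : ℕ → ℕ → ℝ)
    (ht0 : ∀ n : ℕ, 1 ≤ n → t n 0 = 0) (htn : ∀ n : ℕ, 1 ≤ n → t n n = T)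
    (hmono : ∀ n : ℕ, 1 ≤ n → ∀ i j : ℕ, i ≤ j → j ≤ n → t n i ≤ t n j)
    (hmesh : ∀ n : ℕ, 1 ≤ n → ∀ i ∈ Finset.Icc 1 n, t n i - t n (i - 1) ≤ C_τ / n) :
    ENNReal.ofReal (C_H * (B - A) ^ 2 / 2) ≤
      Filter.atTop.liminf (fun n : ℕ =>
        (n : ℝ≥0∞) *
          ∑ i ∈ (Finset.Icc 1 n).filter (fun i => A ≤ t n (i - 1) ∧ t n i ≤ B),
            ∫⁻ s in Set.Ioc (t n (i - 1)) (t n i),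
              ENNReal.ofReal ((t n i - s) * H2 s)) :=
  stmt10_general T A B C_H C_τ hA hAB hB hCH hCτ H2 hH2lb t ht0 htn hmono hmesh
end
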